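/- arXiv:1505.06893 — 9 statements merged into one kernel-verified Lean document; each statement's English description precedes it below -/
import Mathlib

section
/- The constraint matrix of the MIP formulation of the recoverable selection problem is totally unimodular. Concretely, the (3 + 2n) × 3n matrix with rows: (a1) x_i-columns and z_i-columns equal 1, y_i-columns equal 0; (a2) y_i-columns and z_i-columns equal 1, x_i-columns equal 0; (a3) z_i-columns equal 1, others 0; (b_i) for i ∈ [n]: 1 in column x_i and column z_i, 0 elsewhere; (c_i) for i ∈ [n]: 1 in column y_i and column z_i, 0 elsewhere; is totally unimodular. -/
open Matrix

/-- The constraint matrix of the MIP formulation of recoverable selection.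
Rows: `Sum.inl 0` = a1, `Sum.inl 1` = a2, `Sum.inl 2` = a3,
`Sum.inr (Sum.inl i)` = b_i, `Sum.inr (Sum.inr i)` = c_i.
Columns: `Sum.inl i` = x_i, `Sum.inr (Sum.inl i)` = y_i, `Sum.inr (Sum.inr i)` = z_i. -/
def constraintMatrix (n : ℕ) :
    Matrix ((Fin 3) ⊕ (Fin n ⊕ Fin n)) (Fin n ⊕ (Fin n ⊕ Fin n)) ℤ :=
  fun r c =>
    match r, c with
    | Sum.inl 0, Sum.inl _ => 1
    | Sum.inl 0, Sum.inr (Sum.inl _) => 0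
    | Sum.inl 0, Sum.inr (Sum.inr _) => 1
    | Sum.inl 1, Sum.inl _ => 0
    | Sum.inl 1, Sum.inr (Sum.inl _) => 1
    | Sum.inl 1, Sum.inr (Sum.inr _) => 1
    | Sum.inl 2, Sum.inl _ => 0
    | Sum.inl 2, Sum.inr (Sum.inl _) => 0
    | Sum.inl 2, Sum.inr (Sum.inr _) => 1
    | Sum.inr (Sum.inl i), Sum.inl j => if i = j then 1 else 0
    | Sum.inr (Sum.inl _), Sum.inr (Sum.inl _) => 0
    | Sum.inr (Sum.inl i), Sum.inr (Sum.inr j) => if i = j then 1 else 0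
    | Sum.inr (Sum.inr _), Sum.inl _ => 0
    | Sum.inr (Sum.inr i), Sum.inr (Sum.inl j) => if i = j then 1 else 0
    | Sum.inr (Sum.inr i), Sum.inr (Sum.inr j) => if i = j then 1 else 0

lemma gh_det {X Y : Type*} [DecidableEq X] (A : Matrix X Y ℤ)
    (hGH : ∀ S : Finset X, ∃ σ : X → ℤ, (∀ i ∈ S, σ i = 1 ∨ σ i = -1) ∧
      ∀ j : Y, ((∑ i ∈ S, σ i * A i j) = -1 ∨ (∑ i ∈ S, σ i * A i j) = 0 ∨
        (∑ i ∈ S, σ i * A i j) = 1)) :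
    ∀ k : ℕ, ∀ f : Fin k → X, ∀ g : Fin k → Y, Function.Injective f → Function.Injective g →
      ((A.submatrix f g).det = -1 ∨ (A.submatrix f g).det = 0 ∨ (A.submatrix f g).det = 1) := by
  intro k
  induction k using Nat.strong_induction_on with
  | _ k ih =>
  intro f g hf hg
  match k with
  | 0 => right; right; simp [Matrix.det_fin_zero]
  | (m+1) =>
    set B := A.submatrix f g with hB
    by_cases hd : B.det = 0
    · right; left; exact hd
    have hadj : ∀ i j : Fin (m+1), B.adjugate i j = -1 ∨ B.adjugate i j = 0 ∨
        B.adjugate i j = 1 := by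
      intro i j
      rw [Matrix.adjugate_apply, Matrix.det_succ_row _ j,
        Finset.sum_eq_single i (fun l _ hl => by
          simp [Pi.single_apply, hl])
          (by simp)]
      have hsub : (B.updateRow j (Pi.single i 1)).submatrix j.succAbove i.succAbove
          = A.submatrix (f ∘ j.succAbove) (g ∘ i.succAbove) := by
        ext a b
        simp [Matrix.updateRow_ne (Fin.succAbove_ne j a), hB]
      rw [hsub]
      have hdet := ih m (Nat.lt_succ_self m) (f ∘ j.succAbove) (g ∘ i.succAbove)
        (hf.comp (Fin.succAbove_right_injective)) (hg.comp (Fin.succAbove_right_injective))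
      have hsgn : ((-1 : ℤ) ^ ((j : ℕ) + (i : ℕ)) = 1 ∨ (-1 : ℤ) ^ ((j : ℕ) + (i : ℕ)) = -1) :=
        neg_one_pow_eq_or ℤ _
      simp only [Matrix.updateRow_self, Pi.single_eq_same, mul_one]
      rcases hdet with h | h | h <;> rcases hsgn with h2 | h2 <;>
        simp [h, h2]

    have hyB : ∀ j, (∑ i, B.adjugate 0 i * B i j)
        = B.det * (if (0 : Fin (m+1)) = j then 1 else 0) := by
      intro j
      have h := congrFun (congrFun (Matrix.adjugate_mul B) 0) j
      simpa [Matrix.mul_apply, Matrix.one_apply] using h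
    set y : Fin (m+1) → ℤ := fun i => B.adjugate 0 i with hy
    have hyB' : ∀ j, (∑ i, y i * B i j) = B.det * (if (0 : Fin (m+1)) = j then 1 else 0) :=
      hyB
    have hyadj : ∀ i, y i = -1 ∨ y i = 0 ∨ y i = 1 := fun i => hadj 0 i
    set R : Finset (Fin (m+1)) := Finset.univ.filter (fun i => y i ≠ 0) with hR
    obtain ⟨σ, hσ1, hσ2⟩ := hGH (R.image f)
    set w : Fin (m+1) → ℤ := fun i => if y i ≠ 0 then σ (f i) else 0 with hw
    have hwv : ∀ j, (∑ i, w i * B i j) = ∑ x ∈ R.image f, σ x * A x (g j) := by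
      intro j
      rw [Finset.sum_image (fun a _ b _ hab => hf hab)]
      rw [← Finset.sum_subset (Finset.subset_univ R) (fun i _ hiR => ?_)]
      · refine Finset.sum_congr rfl (fun i hi => ?_)
        have hyi : y i ≠ 0 := by simpa [hR] using hi
        simp [hw, hyi, hB]
      · have hyi : ¬ (y i ≠ 0) := by simpa [hR] using hiR
        simp [hw, hyi]
    have hpar : ∀ j, Even ((∑ i, w i * B i j) - (∑ i, y i * B i j)) := by
      intro j
      rw [← Finset.sum_sub_distrib]
      apply Finset.even_sum
      intro i _
      rw [← sub_mul]
      apply Even.mul_right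
      by_cases hyi : y i = 0
      · simp [hw, hyi]
      · have hwi : w i = σ (f i) := by simp [hw, hyi]
        have hfi : f i ∈ R.image f :=
          Finset.mem_image_of_mem f (by simp [hR, hyi])
        have hyv := hyadj i
        rw [hwi]
        rcases hσ1 _ hfi with h1 | h1 <;> rcases hyv with h2 | h2 | h2 <;>
          first
            | exact absurd h2 hyi
            | (rw [h1, h2]; decide)
    have hv0 : ∀ j, j ≠ 0 → (∑ i, w i * B i j) = 0 := by
      intro j hj
      have h1 := hσ2 (g j); rw [← hwv j] at h1
      have h2 := hpar j
      rw [hyB' j, if_neg (Ne.symm hj), mul_zero, sub_zero] at h2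
      rcases h1 with h | h | h
      · rw [h] at h2; norm_num at h2
      · exact h
      · rw [h] at h2; norm_num at h2
    have hvdet : ∀ (u : Fin (m+1) → ℤ), (∀ j, (∑ i, u i * B i j) = 0) → u = 0 := by
      intro u hu
      by_contra hne
      apply hd
      rw [← Matrix.exists_vecMul_eq_zero_iff]
      exact ⟨u, hne, funext fun j => by simpa [Matrix.vecMul, dotProduct] using hu j⟩
    have hRne : ∃ i, y i ≠ 0 := by
      by_contra hno
      push_neg at hno
      have h := hyB' 0
      rw [if_pos rfl, mul_one] at h
      simp only [hno, zero_mul, Finset.sum_const_zero] at h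
      exact hd h.symm
    obtain ⟨i0, hi0⟩ := hRne
    have hσi0 : σ (f i0) = 1 ∨ σ (f i0) = -1 :=
      hσ1 _ (Finset.mem_image_of_mem f (by simp [hR, hi0]))
    have hwi0 : w i0 = σ (f i0) := by simp [hw, hi0]
    have h1 := hσ2 (g 0); rw [← hwv 0] at h1
    have key : ∀ c : ℤ, c = 1 ∨ c = -1 → (∑ i, w i * B i 0) = c →
        (B.det = -1 ∨ B.det = 0 ∨ B.det = 1) := by
      intro c hc hvc
      have hu : (fun i => c * y i - B.det * w i) = 0 := by
        apply hvdet
        intro j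
        have : (∑ i, (c * y i - B.det * w i) * B i j)
            = c * (∑ i, y i * B i j) - B.det * (∑ i, w i * B i j) := by
          rw [Finset.mul_sum, Finset.mul_sum, ← Finset.sum_sub_distrib]
          refine Finset.sum_congr rfl (fun i _ => by ring)
        rw [this, hyB' j]
        by_cases hj : j = 0
        · subst hj
          rw [hvc, if_pos rfl]
          ring
        · rw [hv0 j hj, if_neg (Ne.symm hj)]
          ring
      have h0 := congrFun hu i0
      simp only [Pi.zero_apply, sub_eq_zero] at h0
      have hyv := hyadj i0
      rcases hc with h | h <;> rcases hσi0 with h2 | h2 <;> rcases hyv with h3 | h3 | h3 <;>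
        rw [hwi0] at h0 <;> rw [h, h2, h3] at h0 <;> first
          | (exfalso; exact hi0 h3)
          | omega
    rcases h1 with h | h | h
    · exact key _ (Or.inr rfl) h
    · exfalso
      have := hvdet w (fun j => by
        by_cases hj : j = 0
        · subst hj; exact h
        · exact hv0 j hj)
      have h2 := congrFun this i0
      rw [hwi0] at h2
      simp only [Pi.zero_apply] at h2
      rcases hσi0 with h3 | h3 <;> rw [h3] at h2 <;> norm_num at h2
    · exact key _ (Or.inl rfl) h

lemma sumCollapseAux {n : ℕ} (P : Fin n → Prop) [DecidablePred P] (f : Fin n → ℤ) (t : Fin n) :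
    (∑ i : Fin n, if P i then f i * (if i = t then 1 else 0) else 0)
      = if P t then f t else 0 := by
  rw [Finset.sum_eq_single t]
  · simp
  · intro b _ hb
    simp [hb]
  · simp

lemma sumMemAux {α : Type*} [Fintype α] [DecidableEq α] (S : Finset α) (F : α → ℤ) :
    (∑ i ∈ S, F i) = ∑ i : α, if i ∈ S then F i else 0 := by
  rw [Finset.sum_ite_mem, Finset.univ_inter]

lemma constraintMatrix_gh (n : ℕ) (S : Finset ((Fin 3) ⊕ (Fin n ⊕ Fin n))) :
    ∃ σ : (Fin 3) ⊕ (Fin n ⊕ Fin n) → ℤ,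
      (∀ i ∈ S, σ i = 1 ∨ σ i = -1) ∧
      ∀ j : Fin n ⊕ (Fin n ⊕ Fin n),
        ((∑ i ∈ S, σ i * constraintMatrix n i j) = -1 ∨
         (∑ i ∈ S, σ i * constraintMatrix n i j) = 0 ∨
         (∑ i ∈ S, σ i * constraintMatrix n i j) = 1) := by
  classical
  refine ⟨Sum.elim ![if Sum.inl 2 ∈ S then -1 else 1, -1, 1]
    (Sum.elim
      (fun _ => (if Sum.inl 2 ∈ S then -1 else 1) * (if Sum.inl 0 ∈ S then -1 else 1))
      (fun _ => if Sum.inl 1 ∈ S then 1 else -1)), ?_, ?_⟩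
  · rintro (t | i | i) -
    · fin_cases t
      · simp only [Sum.elim_inl, Matrix.cons_val_zero]
        split_ifs <;> norm_num
      · norm_num
      · norm_num
    · simp only [Sum.elim_inr, Sum.elim_inl]
      split_ifs <;> norm_num
    · simp only [Sum.elim_inr]
      split_ifs <;> norm_num
  · have e1 : ∀ j : Fin n, constraintMatrix n (Sum.inl 0) (Sum.inl j) = 1 := fun _ => rfl
    have e2 : ∀ j : Fin n, constraintMatrix n (Sum.inl 0) (Sum.inr (Sum.inl j)) = 0 := fun _ => rfl
    have e3 : ∀ j : Fin n, constraintMatrix n (Sum.inl 0) (Sum.inr (Sum.inr j)) = 1 := fun _ => rfl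
    have e4 : ∀ j : Fin n, constraintMatrix n (Sum.inl 1) (Sum.inl j) = 0 := fun _ => rfl
    have e5 : ∀ j : Fin n, constraintMatrix n (Sum.inl 1) (Sum.inr (Sum.inl j)) = 1 := fun _ => rfl
    have e6 : ∀ j : Fin n, constraintMatrix n (Sum.inl 1) (Sum.inr (Sum.inr j)) = 1 := fun _ => rfl
    have e7 : ∀ j : Fin n, constraintMatrix n (Sum.inl 2) (Sum.inl j) = 0 := fun _ => rfl
    have e8 : ∀ j : Fin n, constraintMatrix n (Sum.inl 2) (Sum.inr (Sum.inl j)) = 0 := fun _ => rfl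
    have e9 : ∀ j : Fin n, constraintMatrix n (Sum.inl 2) (Sum.inr (Sum.inr j)) = 1 := fun _ => rfl
    have f1 : ∀ i j : Fin n, constraintMatrix n (Sum.inr (Sum.inl i)) (Sum.inl j)
        = if i = j then 1 else 0 := fun _ _ => rfl
    have f2 : ∀ i j : Fin n, constraintMatrix n (Sum.inr (Sum.inl i)) (Sum.inr (Sum.inl j))
        = 0 := fun _ _ => rfl
    have f3 : ∀ i j : Fin n, constraintMatrix n (Sum.inr (Sum.inl i)) (Sum.inr (Sum.inr j))
        = if i = j then 1 else 0 := fun _ _ => rfl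
    have f4 : ∀ i j : Fin n, constraintMatrix n (Sum.inr (Sum.inr i)) (Sum.inl j)
        = 0 := fun _ _ => rfl
    have f5 : ∀ i j : Fin n, constraintMatrix n (Sum.inr (Sum.inr i)) (Sum.inr (Sum.inl j))
        = if i = j then 1 else 0 := fun _ _ => rfl
    have f6 : ∀ i j : Fin n, constraintMatrix n (Sum.inr (Sum.inr i)) (Sum.inr (Sum.inr j))
        = if i = j then 1 else 0 := fun _ _ => rfl
    intro j
    rw [sumMemAux, Fintype.sum_sum_type, Fin.sum_univ_three, Fintype.sum_sum_type]
    rcases j with jx | jy | jz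
    · simp only [e1, e4, e7, f1, f4, Sum.elim_inl, Sum.elim_inr, mul_zero, mul_one,
        ite_self, Finset.sum_const_zero, add_zero, zero_add]
      rw [sumCollapseAux]
      simp only [Matrix.cons_val_zero]
      split_ifs <;> norm_num
    · simp only [e2, e5, e8, f2, f5, Sum.elim_inl, Sum.elim_inr, mul_zero, mul_one,
        ite_self, Finset.sum_const_zero, add_zero, zero_add]
      rw [sumCollapseAux]
      simp only [Matrix.cons_val_one, Matrix.head_cons]
      split_ifs <;> norm_num
    · simp only [e3, e6, e9, f3, f6, Sum.elim_inl, Sum.elim_inr, mul_zero, mul_one,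
        ite_self, Finset.sum_const_zero, add_zero, zero_add]
      rw [sumCollapseAux, sumCollapseAux]
      simp only [Matrix.cons_val_zero, Matrix.cons_val_one, Matrix.head_cons, Matrix.cons_val_two,
        Matrix.tail_cons]
      split_ifs <;> norm_num

/-- The constraint matrix is totally unimodular: every square submatrix has
determinant in {-1, 0, 1}. -/
theorem constraintMatrix_totallyUnimodular (n : ℕ) :
    ∀ (m : ℕ) (r : Fin m → (Fin 3) ⊕ (Fin n ⊕ Fin n))
      (c : Fin m → Fin n ⊕ (Fin n ⊕ Fin n)),
      ((constraintMatrix n).submatrix r c).det ∈ ({-1, 0, 1} : Set ℤ) := by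
  intro m r c
  by_cases h : Function.Injective r ∧ Function.Injective c
  · rcases gh_det _ (constraintMatrix_gh n) m r c h.1 h.2 with h' | h' | h' <;> simp [h']
  · have hz : ((constraintMatrix n).submatrix r c).det = 0 := by
      simp_rw [not_and_or, Function.not_injective_iff] at h
      obtain ⟨i, j, hrij, hij⟩ | ⟨i, j, hcij, hij⟩ := h
      · rw [← Matrix.det_transpose, Matrix.transpose_submatrix]
        apply Matrix.det_zero_of_column_eq hij.symm
        simp [hrij]
      · apply Matrix.det_zero_of_column_eq hij
        simp [hcij]
    simp [hz]
end

section
/- For every subset R of rows of the constraint matrix above, decomposed as R = A ∪ B ∪ C with A ⊆ {a1,a2,a3}, B ⊆ {b_1,…,b_n}, C ⊆ {c_1,…,c_n}, there is a ±1-coloring l of R such that for every column, the weighted column sum ∑_{r∈R} l(r)·a_{r,j} lies in {−1,0,1}. In particular: if A = ∅ take l(b_i)=1, l(c_i)=−1; if A = {a1,a2,a3} take l(a1)=l(a2)=1, l(a3)=−1, l(b_i)=l(c_i)=−1; and analogous colorings exist in all other cases for A. -/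
open Matrix

theorem ite_add_ite_neg_mem {α : Type*} [AddGroup α] (P Q : Prop) [Decidable P] [Decidable Q]
    (s : α) :
    (if P then s else 0) + (if Q then (if P then -s else s) else 0) ∈ ({0, s} : Set α) := by
  split_ifs <;> simp

theorem Matrix.sum_mul_eq_vecMul_indicator {ι κ α : Type*} [Fintype ι] [CommSemiring α]
    (M : Matrix ι κ α) (R : Finset ι) (l : ι → α) (j : κ) :
    ∑ r ∈ R, l r * M r j = ((R : Set ι).indicator l ᵥ* M) j := by
  rw [← Finset.sum_indicator_subset _ R.subset_univ]
  exact Finset.sum_congr rfl fun r _ => Set.indicator_mul_left _ _ _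

namespace constraintMatrix

section

variable {n : ℕ} (v : (Fin 3) ⊕ (Fin n ⊕ Fin n) → ℤ) (j : Fin n)

theorem vecMul_x :
    (v ᵥ* constraintMatrix n) (Sum.inl j) = v (Sum.inl 0) + v (Sum.inr (Sum.inl j)) := by
  simp [vecMul, dotProduct, Fintype.sum_sum_type, Fin.sum_univ_three, constraintMatrix]

theorem vecMul_y :
    (v ᵥ* constraintMatrix n) (Sum.inr (Sum.inl j)) =
      v (Sum.inl 1) + v (Sum.inr (Sum.inr j)) := by
  simp [vecMul, dotProduct, Fintype.sum_sum_type, Fin.sum_univ_three, constraintMatrix]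

theorem vecMul_z :
    (v ᵥ* constraintMatrix n) (Sum.inr (Sum.inr j)) =
      (v ᵥ* constraintMatrix n) (Sum.inl j) + (v ᵥ* constraintMatrix n) (Sum.inr (Sum.inl j))
        + v (Sum.inl 2) := by
  simp [vecMul, dotProduct, Fintype.sum_sum_type, Fin.sum_univ_three, constraintMatrix]
  ring

end

variable {n : ℕ}

def coloring (R : Finset ((Fin 3) ⊕ (Fin n ⊕ Fin n))) :
    (Fin 3) ⊕ (Fin n ⊕ Fin n) → ℤ :=
  let q : ℤ := if Sum.inl 2 ∈ R then 1 else -1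
  Sum.elim ![1, q, -1]
    (Sum.elim (fun _ => if Sum.inl 0 ∈ R then -1 else 1)
      (fun _ => if Sum.inl 1 ∈ R then -q else q))

theorem coloring_eq_one_or_neg_one (R : Finset ((Fin 3) ⊕ (Fin n ⊕ Fin n)))
    (r : (Fin 3) ⊕ (Fin n ⊕ Fin n)) :
    coloring R r = 1 ∨ coloring R r = -1 := by
  rcases r with i | i | i
  · fin_cases i <;> simp [coloring, em]
  all_goals simp only [coloring, Sum.elim_inr, Sum.elim_inl]; split_ifs <;> simp

theorem sum_mul_coloring_mem (R : Finset ((Fin 3) ⊕ (Fin n ⊕ Fin n)))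
    (j : Fin n ⊕ (Fin n ⊕ Fin n)) :
    ∑ r ∈ R, coloring R r * constraintMatrix n r j ∈ ({-1, 0, 1} : Set ℤ) := by
  rw [sum_mul_eq_vecMul_indicator]
  set v := (R : Set _).indicator (coloring R)
  set q : ℤ := if Sum.inl 2 ∈ R then 1 else -1
  have hx (i : Fin n) : (v ᵥ* constraintMatrix n) (Sum.inl i) = 0 ∨
      (v ᵥ* constraintMatrix n) (Sum.inl i) = 1 := by
    rw [vecMul_x]
    simpa [v, Set.indicator_apply, coloring] using ite_add_ite_neg_mem _ _ (1 : ℤ)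
  have hy (i : Fin n) : (v ᵥ* constraintMatrix n) (Sum.inr (Sum.inl i)) = 0 ∨
      (v ᵥ* constraintMatrix n) (Sum.inr (Sum.inl i)) = q := by
    rw [vecMul_y]
    simpa [v, Set.indicator_apply, coloring] using ite_add_ite_neg_mem _ _ q
  have h3 : v (Sum.inl 2) = if Sum.inl 2 ∈ R then -1 else 0 := by
    simp [v, Set.indicator_apply, coloring]
  have hq : q = 1 ∨ q = -1 := by unfold q; split_ifs <;> simp
  rcases j with i | i | i
  · rcases hx i with h | h <;> simp [h]
  · rcases hy i with h | h <;> rcases hq with hq | hq <;> simp [h, hq]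
  · rw [vecMul_z, h3]
    by_cases h2 : Sum.inl 2 ∈ R <;> simp only [q, h2, if_true, if_false] at hy ⊢ <;>
      rcases hx i with hx | hx <;> rcases hy i with hy | hy <;> simp [hx, hy]

theorem sum_mul_mem_of_eqOn_coloring {R : Finset ((Fin 3) ⊕ (Fin n ⊕ Fin n))}
    {l : (Fin 3) ⊕ (Fin n ⊕ Fin n) → ℤ} (hl : Set.EqOn l (coloring R) R)
    (j : Fin n ⊕ (Fin n ⊕ Fin n)) :
    ∑ r ∈ R, l r * constraintMatrix n r j ∈ ({-1, 0, 1} : Set ℤ) := by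
  rw [Finset.sum_congr rfl fun r hr => by rw [hl hr]]
  exact sum_mul_coloring_mem R j

end constraintMatrix

/-- Ghouila-Houri coloring for the constraint matrix: every subset of rows admits
a ±1 coloring under which every weighted column sum lies in {-1,0,1}.  In the case
where no `a`-row is present one can take `l(b_i)=1`, `l(c_i)=-1`, and in the case
where all three `a`-rows are present one can take `l(a1)=l(a2)=1`, `l(a3)=-1`,
`l(b_i)=l(c_i)=-1`. -/
theorem constraintMatrix_ghouilaHouri (n : ℕ) :
    (∀ R : Finset ((Fin 3) ⊕ (Fin n ⊕ Fin n)),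
      ∃ l : (Fin 3) ⊕ (Fin n ⊕ Fin n) → ℤ,
        (∀ r ∈ R, l r = 1 ∨ l r = -1) ∧
        ∀ j : Fin n ⊕ (Fin n ⊕ Fin n),
          (∑ r ∈ R, l r * constraintMatrix n r j) ∈ ({-1, 0, 1} : Set ℤ)) ∧
    (∀ R : Finset ((Fin 3) ⊕ (Fin n ⊕ Fin n)),
      (∀ i : Fin 3, Sum.inl i ∉ R) →
      ∀ j : Fin n ⊕ (Fin n ⊕ Fin n),
        (∑ r ∈ R, (Sum.elim (fun _ => (1 : ℤ))
            (Sum.elim (fun _ => 1) (fun _ => -1)) r) * constraintMatrix n r j)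
          ∈ ({-1, 0, 1} : Set ℤ)) ∧
    (∀ R : Finset ((Fin 3) ⊕ (Fin n ⊕ Fin n)),
      (∀ i : Fin 3, Sum.inl i ∈ R) →
      ∀ j : Fin n ⊕ (Fin n ⊕ Fin n),
        (∑ r ∈ R, (Sum.elim (fun i : Fin 3 => if i = 2 then (-1 : ℤ) else 1)
            (fun _ => -1) r) * constraintMatrix n r j)
          ∈ ({-1, 0, 1} : Set ℤ)) := by
  refine ⟨fun R => ⟨constraintMatrix.coloring R,
      fun r _ => constraintMatrix.coloring_eq_one_or_neg_one R r,
      constraintMatrix.sum_mul_coloring_mem R⟩,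
    fun R hR => constraintMatrix.sum_mul_mem_of_eqOn_coloring ?_,
    fun R hR => constraintMatrix.sum_mul_mem_of_eqOn_coloring ?_⟩
  · rintro (i | i | i) hr
    · exact absurd hr (hR i)
    · simp [constraintMatrix.coloring, hR 0]
    · simp [constraintMatrix.coloring, hR 1, hR 2]
  · rintro (i | i | i) -
    · fin_cases i <;> simp [constraintMatrix.coloring, hR 2]
    · simp [constraintMatrix.coloring, hR 0]
    · simp [constraintMatrix.coloring, hR 1, hR 2]
end

section
/- For every θ ≥ 0 there exists an optimal 0-1 solution (x, y, z) of the Lagrangian relaxation such that the sets E_X = {e_i : x_i = 1}, E_Y = {e_i : y_i = 1}, E_Z = {e_i : z_i = 1} are pairwise disjoint. In particular, if an optimal 0-1 solution has some index i with x_i = y_i = 1 and the modification z_i := 1, x_i := 0, y_i := 0 is feasible, then its objective value is at most the original value minus θ (so strictly smaller when θ > 0). -/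
open Finset

/-- Feasibility of a 0-1 solution to the Lagrangian relaxation, encoded by the
sets `EX = {i : x_i = 1}`, `EY = {i : y_i = 1}`, `EZ = {i : z_i = 1}`. -/
def LagFeasible (n p : ℕ) (EX EY EZ : Finset (Fin n)) : Prop :=
  EX.card + EZ.card = p ∧ EY.card + EZ.card = p ∧ EX ∩ EZ = ∅ ∧ EY ∩ EZ = ∅

/-- Objective of the Lagrangian relaxation with multiplier θ. -/
noncomputable def lagObj (n p k : ℕ) (C cbar : Fin n → ℝ) (θ : ℝ)
    (EX EY EZ : Finset (Fin n)) : ℝ :=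
  ∑ i ∈ EX, C i + ∑ i ∈ EY, cbar i + ∑ i ∈ EZ, (C i + cbar i - θ) +
    ((p : ℝ) - (k : ℝ)) * θ

/-!
Moving a set `S ⊆ E_X ∩ E_Y` of indices into `E_Z` keeps a solution feasible and lowers the
objective by exactly `|S| θ`, since each moved index contributes `C_i + c̄_i - θ` instead of
`C_i + c̄_i`. Applying this with `S = E_X ∩ E_Y` to a minimiser (which exists, the feasible
set being finite and containing `(∅, ∅, Z)` for any `|Z| = p`) yields a minimiser with pairwise
disjoint supports, because `θ ≥ 0`; with `S = {i}` it gives the second claim.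
-/

namespace LagFeasible

variable {n p : ℕ} {EX EY EZ S : Finset (Fin n)}

theorem disjoint_z_of_subset_x (h : LagFeasible n p EX EY EZ) (hS : S ⊆ EX) :
    Disjoint EZ S :=
  (disjoint_iff_inter_eq_empty.mpr h.2.2.1).symm.mono_right hS

theorem sdiff_sdiff_union (h : LagFeasible n p EX EY EZ) (hS : S ⊆ EX ∩ EY) :
    LagFeasible n p (EX \ S) (EY \ S) (EZ ∪ S) := by
  have hSX : S ⊆ EX := hS.trans inter_subset_left
  have hSY : S ⊆ EY := hS.trans inter_subset_right
  have hZS : #(EZ ∪ S) = #EZ + #S := card_union_of_disjoint (h.disjoint_z_of_subset_x hSX)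
  obtain ⟨hx, hy, hxz, hyz⟩ := h
  have hcx := card_sdiff_add_card_eq_card hSX
  have hcy := card_sdiff_add_card_eq_card hSY
  refine ⟨by omega, by omega, ?_, ?_⟩ <;> rw [← disjoint_iff_inter_eq_empty, disjoint_union_right]
  · exact ⟨(disjoint_iff_inter_eq_empty.mpr hxz).mono_left sdiff_subset, sdiff_disjoint⟩
  · exact ⟨(disjoint_iff_inter_eq_empty.mpr hyz).mono_left sdiff_subset, sdiff_disjoint⟩

end LagFeasible

theorem lagFeasible_empty_empty_of_le {n p : ℕ} (hpn : p ≤ n) :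
    ∃ EZ : Finset (Fin n), LagFeasible n p ∅ ∅ EZ := by
  obtain ⟨EZ, -, hEZ⟩ := exists_subset_card_eq (s := (univ : Finset (Fin n))) (by simpa using hpn)
  exact ⟨EZ, by simp [LagFeasible, hEZ]⟩

theorem exists_lagFeasible_forall_lagObj_le {n p : ℕ} (k : ℕ) (C cbar : Fin n → ℝ) (θ : ℝ)
    (hpn : p ≤ n) :
    ∃ EX EY EZ : Finset (Fin n), LagFeasible n p EX EY EZ ∧
      ∀ EX' EY' EZ' : Finset (Fin n), LagFeasible n p EX' EY' EZ' →
        lagObj n p k C cbar θ EX EY EZ ≤ lagObj n p k C cbar θ EX' EY' EZ' := by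
  classical
  let feasible := (univ : Finset (Finset (Fin n) × Finset (Fin n) × Finset (Fin n))).filter
    fun t => LagFeasible n p t.1 t.2.1 t.2.2
  obtain ⟨EZ, hEZ⟩ := lagFeasible_empty_empty_of_le hpn
  obtain ⟨⟨EX, EY, EZ⟩, hmem, hmin⟩ := feasible.exists_min_image
    (fun t => lagObj n p k C cbar θ t.1 t.2.1 t.2.2) ⟨(∅, ∅, EZ), by simpa [feasible] using hEZ⟩
  exact ⟨EX, EY, EZ, by simpa [feasible] using hmem,
    fun EX' EY' EZ' h' => hmin (EX', EY', EZ') (by simpa [feasible] using h')⟩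

theorem lagObj_sdiff_sdiff_union {n p k : ℕ} {C cbar : Fin n → ℝ} {θ : ℝ}
    {EX EY EZ S : Finset (Fin n)} (hSX : S ⊆ EX) (hSY : S ⊆ EY) (hZS : Disjoint EZ S) :
    lagObj n p k C cbar θ (EX \ S) (EY \ S) (EZ ∪ S) =
      lagObj n p k C cbar θ EX EY EZ - #S * θ := by
  simp only [lagObj, sum_sdiff_eq_sub hSX, sum_sdiff_eq_sub hSY, sum_union hZS,
    sum_sub_distrib, sum_add_distrib, sum_const, nsmul_eq_mul]
  ring

theorem lagrangian_disjoint_optimal_exists_general (n p k : ℕ) (hpn : p ≤ n)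
    (C cbar : Fin n → ℝ)
    (θ : ℝ) (hθ : 0 ≤ θ) :
    (∃ EX EY EZ : Finset (Fin n), LagFeasible n p EX EY EZ ∧
      EX ∩ EY = ∅ ∧ EX ∩ EZ = ∅ ∧ EY ∩ EZ = ∅ ∧
      ∀ EX' EY' EZ' : Finset (Fin n), LagFeasible n p EX' EY' EZ' →
        lagObj n p k C cbar θ EX EY EZ ≤ lagObj n p k C cbar θ EX' EY' EZ') ∧
    (∀ (EX EY EZ : Finset (Fin n)) (i : Fin n),
      LagFeasible n p EX EY EZ → i ∈ EX → i ∈ EY →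
      LagFeasible n p (EX \ {i}) (EY \ {i}) (EZ ∪ {i}) →
      lagObj n p k C cbar θ (EX \ {i}) (EY \ {i}) (EZ ∪ {i}) ≤
        lagObj n p k C cbar θ EX EY EZ - θ) := by
  constructor
  · obtain ⟨EX, EY, EZ, hfeas, hmin⟩ := exists_lagFeasible_forall_lagObj_le k C cbar θ hpn
    have hfeas' := hfeas.sdiff_sdiff_union (subset_refl (EX ∩ EY))
    refine ⟨_, _, _, hfeas', by ext; simp; tauto, hfeas'.2.2.1, hfeas'.2.2.2,
      fun EX' EY' EZ' h' => ?_⟩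
    rw [lagObj_sdiff_sdiff_union inter_subset_left inter_subset_right
      (hfeas.disjoint_z_of_subset_x inter_subset_left)]
    exact (sub_le_self _ (by positivity)).trans (hmin EX' EY' EZ' h')
  · intro EX EY EZ i hfeas hiX hiY _
    have hi := singleton_subset_iff.mpr hiX
    rw [lagObj_sdiff_sdiff_union hi (singleton_subset_iff.mpr hiY)
      (hfeas.disjoint_z_of_subset_x hi), card_singleton, Nat.cast_one, one_mul]

theorem lagrangian_disjoint_optimal_exists (n p k : ℕ) (hp1 : 1 ≤ p) (hpn : p ≤ n)
    (hk : k ≤ p) (C cbar : Fin n → ℝ) (hC : ∀ i, 0 ≤ C i) (hcb : ∀ i, 0 ≤ cbar i)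
    (θ : ℝ) (hθ : 0 ≤ θ) :
    (∃ EX EY EZ : Finset (Fin n), LagFeasible n p EX EY EZ ∧
      EX ∩ EY = ∅ ∧ EX ∩ EZ = ∅ ∧ EY ∩ EZ = ∅ ∧
      ∀ EX' EY' EZ' : Finset (Fin n), LagFeasible n p EX' EY' EZ' →
        lagObj n p k C cbar θ EX EY EZ ≤ lagObj n p k C cbar θ EX' EY' EZ') ∧
    (∀ (EX EY EZ : Finset (Fin n)) (i : Fin n),
      LagFeasible n p EX EY EZ → i ∈ EX → i ∈ EY →
      LagFeasible n p (EX \ {i}) (EY \ {i}) (EZ ∪ {i}) →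
      lagObj n p k C cbar θ (EX \ {i}) (EY \ {i}) (EZ ∪ {i}) ≤
        lagObj n p k C cbar θ EX EY EZ - θ) :=
  lagrangian_disjoint_optimal_exists_general n p k hpn C cbar θ hθ
end

section
/- Under interval uncertainty, the Two-Stage Selection problem satisfies opt₁ = ∑ of the p smallest values of ĉ_e := min{C_e, c̄_e}. Specifically, if Z is a set of p items minimizing ∑_{e∈Z} ĉ_e, and we set X = {e ∈ Z : C_e ≤ c̄_e}, then X is an optimal first-stage solution with max_{S∈U^I} f₁(X,S) = ∑_{e∈Z} ĉ_e, and no first-stage solution achieves a smaller worst-case cost. -/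
/-!
Buying an item in the first stage costs `C e`, leaving it to the second stage costs at worst
`cbar e`, so every item of a feasible pair `(X, Y)` costs at least `min (C e) (cbar e)`, and
`X ∪ Y` is a `p`-set: no solution beats the `p` smallest values of `min (C e) (cbar e)`.
Conversely, splitting an optimal `p`-set `Z` by which of the two costs is smaller attains them.
-/

open Finset

namespace Finset

variable {α M : Type*}

theorem sum_filter_add_sum_filter_not_eq_sum_min [AddCommMonoid M] [LinearOrder M]
    (Z : Finset α) (f g : α → M) :
    ∑ e ∈ Z.filter (fun e => f e ≤ g e), f e + ∑ e ∈ Z.filter (fun e => ¬ f e ≤ g e), g e =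
      ∑ e ∈ Z, min (f e) (g e) := by
  rw [← sum_filter_add_sum_filter_not Z (fun e => f e ≤ g e)]
  congr 1
  · exact sum_congr rfl fun e he => (min_eq_left (mem_filter.mp he).2).symm
  · exact sum_congr rfl fun e he => (min_eq_right (le_of_not_ge (mem_filter.mp he).2)).symm

theorem sum_union_min_le [DecidableEq α] [AddCommMonoid M] [LinearOrder M]
    [IsOrderedAddMonoid M] {X Y : Finset α} (hXY : Disjoint X Y) (f g : α → M) :
    ∑ e ∈ X ∪ Y, min (f e) (g e) ≤ ∑ e ∈ X, f e + ∑ e ∈ Y, g e := by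
  rw [sum_union hXY]
  gcongr with e
  exacts [min_le_left _ _, min_le_right _ _]

theorem filter_not_subset_sdiff_filter [DecidableEq α] {Z E : Finset α} (hZE : Z ⊆ E)
    (P : α → Prop) [DecidablePred P] :
    Z.filter (fun e => ¬ P e) ⊆ E \ Z.filter P := fun _ he =>
  mem_sdiff.mpr ⟨hZE (mem_filter.mp he).1, fun h => (mem_filter.mp he).2 (mem_filter.mp h).2⟩

end Finset

theorem two_stage_interval_opt_general {α : Type*} [DecidableEq α] (E : Finset α)
    (C cbar : α → ℝ)
    (p : ℕ)
    (Z : Finset α) (hZE : Z ⊆ E) (hZ : Z.card = p)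
    (hZopt : ∀ Z' ⊆ E, Z'.card = p →
      ∑ e ∈ Z, min (C e) (cbar e) ≤ ∑ e ∈ Z', min (C e) (cbar e)) :
    IsLeast
      {v : ℝ | ∃ X ⊆ E, X.card ≤ p ∧ ∃ Y ⊆ E \ X, Y.card = p - X.card ∧
        v = ∑ e ∈ X, C e + ∑ e ∈ Y, cbar e}
      (∑ e ∈ Z, min (C e) (cbar e)) ∧
    ∃ Y ⊆ E \ (Z.filter (fun e => C e ≤ cbar e)),
      Y.card = p - (Z.filter (fun e => C e ≤ cbar e)).card ∧
      ∑ e ∈ Z.filter (fun e => C e ≤ cbar e), C e + ∑ e ∈ Y, cbar e =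
        ∑ e ∈ Z, min (C e) (cbar e) := by
  set X := Z.filter (fun e => C e ≤ cbar e)
  set Y := Z.filter (fun e => ¬ C e ≤ cbar e)
  have hYX : Y ⊆ E \ X := filter_not_subset_sdiff_filter hZE _
  have hYcard : Y.card = p - X.card := by
    have : X.card + Y.card = Z.card := card_filter_add_card_filter_not _
    omega
  have hcost := sum_filter_add_sum_filter_not_eq_sum_min Z C cbar
  refine ⟨⟨⟨X, (filter_subset _ Z).trans hZE, hZ ▸ card_filter_le _ _, Y, hYX, hYcard,
    hcost.symm⟩, ?_⟩, Y, hYX, hYcard, hcost⟩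
  rintro v ⟨X', hX'E, hX'p, Y', hY'E, hY'card, rfl⟩
  have hdisj : Disjoint X' Y' := disjoint_of_subset_right hY'E disjoint_sdiff
  have hcard : (X' ∪ Y').card = p := by rw [card_union_of_disjoint hdisj]; omega
  exact (hZopt _ (union_subset hX'E (hY'E.trans sdiff_subset)) hcard).trans
    (sum_union_min_le hdisj C cbar)

theorem two_stage_interval_opt {α : Type*} [DecidableEq α] (E : Finset α)
    (C cbar : α → ℝ) (hC : ∀ e ∈ E, 0 ≤ C e) (hcb : ∀ e ∈ E, 0 ≤ cbar e)
    (p : ℕ) (hp1 : 1 ≤ p) (hpn : p ≤ E.card)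
    (Z : Finset α) (hZE : Z ⊆ E) (hZ : Z.card = p)
    (hZopt : ∀ Z' ⊆ E, Z'.card = p →
      ∑ e ∈ Z, min (C e) (cbar e) ≤ ∑ e ∈ Z', min (C e) (cbar e)) :
    IsLeast
      {v : ℝ | ∃ X ⊆ E, X.card ≤ p ∧ ∃ Y ⊆ E \ X, Y.card = p - X.card ∧
        v = ∑ e ∈ X, C e + ∑ e ∈ Y, cbar e}
      (∑ e ∈ Z, min (C e) (cbar e)) ∧
    ∃ Y ⊆ E \ (Z.filter (fun e => C e ≤ cbar e)),
      Y.card = p - (Z.filter (fun e => C e ≤ cbar e)).card ∧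
      ∑ e ∈ Z.filter (fun e => C e ≤ cbar e), C e + ∑ e ∈ Y, cbar e =
        ∑ e ∈ Z, min (C e) (cbar e) :=
  two_stage_interval_opt_general E C cbar p Z hZE hZ hZopt
end

section
/- In the Balanced-Partition reduction for Two-Stage Selection with three scenarios: given positive integers a_1,…,a_n (n even) with ∑_i a_i = 2b, construct items e_1,…,e_n with first-stage cost 3b + a_i and scenario costs c^{S1}_{e_i} = 2a_i, c^{S2}_{e_i} = 6b/n − a_i, c^{S3}_{e_i} = M, plus items f_1,…,f_{n/2} with first-stage cost M and scenario costs M, M, 0, where M = 4nb, and set p = n. Then there exists I ⊆ [n] with |I| = n/2 and ∑_{i∈I} a_i = b if and only if opt₁ ≤ (3n/2 + 3)·b. -/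
open Finset

/-- Second-stage completion cost: the minimum cost of completing `X` to `p`
items using items outside `X`, under scenario costs `c`. -/
noncomputable def complMin {ι : Type*} [Fintype ι] [DecidableEq ι]
    (c : ι → ℝ) (X : Finset ι) (p : ℕ) : ℝ :=
  sInf {v : ℝ | ∃ Y ⊆ Finset.univ \ X, Y.card = p - X.card ∧ v = ∑ e ∈ Y, c e}

/-- The two-stage cost `f₁(X,S)` of a first-stage solution `X`. -/
noncomputable def f1 {ι : Type*} [Fintype ι] [DecidableEq ι]
    (C c : ι → ℝ) (X : Finset ι) (p : ℕ) : ℝ :=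
  ∑ e ∈ X, C e + complMin c X p

/-!
If `I` is balanced, buying `e_i` for `i ∈ I` costs `3mb + b`; the remaining `e_i` complete it at
cost `2b` in both `S1` and `S2`, and the `f_j` complete it for free in `S3`.

Conversely, let `X` have cost at most `T = (3m + 3)b < M` in every scenario. Then `X` contains no
`f_j`, and in `S3` a completion of more than `m` items would have to buy some `e_i` at cost `M`, so
`X = {e_i : i ∈ I}` with `|I| ≥ m`. Since the first stage already costs at least `3mb`, the
completions in `S1` and `S2` cannot afford any `f_j` either, so both are `{e_i : i ∉ I}`. With
`A = ∑_{i ∈ I} a_i ≤ 2b`, the bound in `S1` reads `3b(|I| - m) + b ≤ A`, forcing `|I| = m`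
and `A ≥ b`, and the bound in `S2` then reads `A ≤ b`.
-/

section MinOverFinite

variable {α : Type*} [Finite α] {P : α → Prop} {g : α → ℝ}

theorem sInf_setOf_le_iff (hP : ∃ x, P x) (L : ℝ) :
    sInf {v | ∃ x, P x ∧ v = g x} ≤ L ↔ ∃ x, P x ∧ g x ≤ L := by
  have hfin : {v | ∃ x, P x ∧ v = g x}.Finite :=
    (Set.finite_range g).subset (by rintro v ⟨x, -, rfl⟩; exact ⟨x, rfl⟩)
  constructor
  · intro h
    obtain ⟨x, hx⟩ := hP
    obtain ⟨y, hy, hv⟩ : sInf {v | ∃ x, P x ∧ v = g x} ∈ {v | ∃ x, P x ∧ v = g x} :=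
      Set.Nonempty.csInf_mem ⟨g x, x, hx, rfl⟩ hfin
    exact ⟨y, hy, hv ▸ h⟩
  · rintro ⟨x, hx, hle⟩
    exact (csInf_le hfin.bddBelow ⟨x, hx, rfl⟩).trans hle

end MinOverFinite

section TwoStage

variable {ι : Type*} [Fintype ι] [DecidableEq ι] {C c : ι → ℝ} {X : Finset ι} {p : ℕ}

theorem complMin_le_iff (hp : p ≤ Fintype.card ι) (L : ℝ) :
    complMin c X p ≤ L ↔ ∃ Y ⊆ univ \ X, #Y = p - #X ∧ ∑ e ∈ Y, c e ≤ L := by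
  have hfeas : ∃ Y, Y ⊆ univ \ X ∧ #Y = p - #X :=
    exists_subset_card_eq (by rw [card_univ_sdiff]; omega)
  simpa only [complMin, and_assoc] using
    sInf_setOf_le_iff (g := fun Y => ∑ e ∈ Y, c e) hfeas L

theorem f1_le_iff (hp : p ≤ Fintype.card ι) (L : ℝ) :
    f1 C c X p ≤ L ↔
      ∃ Y ⊆ univ \ X, #Y = p - #X ∧ ∑ e ∈ X, C e + ∑ e ∈ Y, c e ≤ L := by
  simp only [f1, ← le_sub_iff_add_le', complMin_le_iff hp]

end TwoStage

section SumType

variable {ι κ : Type*} {g : ι → ℝ} {M L : ℝ}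

theorem toRight_eq_empty_of_sum_elim_lt {s : Finset (ι ⊕ κ)} (hM : 0 ≤ M)
    (hL : ∀ Z : Finset ι, L ≤ ∑ i ∈ Z, g i)
    (h : ∑ e ∈ s, Sum.elim g (fun _ => M) e < L + M) : s.toRight = ∅ := by
  rw [sum_sum_eq_sum_toLeft_add_sum_toRight] at h
  simp only [Sum.elim_inl, Sum.elim_inr, sum_const, nsmul_eq_mul] at h
  by_contra hne
  have : (1 : ℝ) ≤ #s.toRight := by
    exact_mod_cast one_le_card.mpr (nonempty_iff_ne_empty.mpr hne)
  nlinarith [hL s.toLeft]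

variable [Fintype ι] [Fintype κ]

theorem toRight_eq_empty_and_card_le_of_sum_lt {f : ι → ℝ} (hf : ∀ i, 0 ≤ f i)
    (hM : 0 ≤ M) {X Y : Finset (ι ⊕ κ)} (hYcard : #Y = Fintype.card ι - #X)
    (h : ∑ e ∈ X, Sum.elim f (fun _ => M) e +
      ∑ e ∈ Y, Sum.elim (fun _ => M) (fun _ => 0) e < M) :
    X.toRight = ∅ ∧ Fintype.card ι ≤ #X.toLeft + Fintype.card κ := by
  simp only [sum_sum_eq_sum_toLeft_add_sum_toRight, Sum.elim_inl, Sum.elim_inr, sum_const,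
    nsmul_eq_mul, mul_zero, add_zero] at h
  have hheavy : #X.toRight + #Y.toLeft = 0 := by
    by_contra hne
    have : (1 : ℝ) ≤ #X.toRight + #Y.toLeft := by
      exact_mod_cast Nat.one_le_iff_ne_zero.mpr hne
    nlinarith [sum_nonneg fun i (_ : i ∈ X.toLeft) => hf i]
  have hXc := X.card_toLeft_add_card_toRight
  have hYc := Y.card_toLeft_add_card_toRight
  have hYR : #Y.toRight ≤ Fintype.card κ := card_le_univ _
  exact ⟨card_eq_zero.mp (by omega), by omega⟩

variable [DecidableEq ι] [DecidableEq κ]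

theorem toLeft_eq_compl_of_toRight_eq_empty {X Y : Finset (ι ⊕ κ)} (hX : X.toRight = ∅)
    (hY : Y ⊆ univ \ X) (hYcard : #Y = Fintype.card ι - #X) (hYR : Y.toRight = ∅) :
    Y.toLeft = X.toLeftᶜ := by
  refine eq_of_subset_of_card_le (fun i hi => ?_) ?_
  · simpa using (mem_sdiff.mp (hY (mem_toLeft.mp hi))).2
  · have hXc := X.card_toLeft_add_card_toRight
    have hYc := Y.card_toLeft_add_card_toRight
    rw [hX, card_empty] at hXc
    rw [hYR, card_empty] at hYc
    rw [card_compl]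
    omega

theorem sum_elim_eq_sum_compl_of_lt {X Y : Finset (ι ⊕ κ)} (hX : X.toRight = ∅)
    (hY : Y ⊆ univ \ X) (hYcard : #Y = Fintype.card ι - #X) (hM : 0 ≤ M)
    (hL : ∀ Z : Finset ι, L ≤ ∑ i ∈ Z, g i)
    (h : ∑ e ∈ Y, Sum.elim g (fun _ => M) e < L + M) :
    ∑ e ∈ Y, Sum.elim g (fun _ => M) e = ∑ i ∈ X.toLeftᶜ, g i := by
  have hYR := toRight_eq_empty_of_sum_elim_lt hM hL h
  rw [sum_sum_eq_sum_toLeft_add_sum_toRight, hYR,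
    toLeft_eq_compl_of_toRight_eq_empty hX hY hYcard hYR, sum_empty, add_zero]
  rfl

end SumType

namespace BalancedPartitionReduction

variable {m : ℕ} (a : Fin (2 * m) → ℕ) (b : ℕ)

/- Items `Sum.inl i` are the paper's `e_i` and items `Sum.inr j` its `f_j`; with `n = 2 * m`, the
constant `4 * (2 * m) * b` is `M = 4nb`. -/
noncomputable def firstStageCost : Fin (2 * m) ⊕ Fin m → ℝ :=
  Sum.elim (fun i => 3 * b + (a i : ℝ)) (fun _ => 4 * (2 * m) * b)

noncomputable def scenarioCost₁ : Fin (2 * m) ⊕ Fin m → ℝ :=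
  Sum.elim (fun i => 2 * (a i : ℝ)) (fun _ => 4 * (2 * m) * b)

noncomputable def scenarioCost₂ : Fin (2 * m) ⊕ Fin m → ℝ :=
  Sum.elim (fun i => 6 * b / (2 * m) - (a i : ℝ)) (fun _ => 4 * (2 * m) * b)

noncomputable def scenarioCost₃ : Fin (2 * m) ⊕ Fin m → ℝ :=
  Sum.elim (fun _ => 4 * (2 * m) * b) (fun _ => 0)

variable {a b}

theorem sum_compl_eq_of_balanced (hsum : ∑ i, a i = 2 * b) {I : Finset (Fin (2 * m))}
    (hIa : ∑ i ∈ I, a i = b) : ∑ i ∈ Iᶜ, (a i : ℝ) = b := by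
  have h := sum_add_sum_compl I a
  rw [hsum, hIa] at h
  exact_mod_cast (by omega : ∑ i ∈ Iᶜ, a i = b)

theorem f1_le_of_balanced (hsum : ∑ i, a i = 2 * b) {I : Finset (Fin (2 * m))} (hI : #I = m)
    (hIa : ∑ i ∈ I, a i = b) :
    f1 (firstStageCost a b) (scenarioCost₁ a b) (I.disjSum ∅) (2 * m) ≤ (3 * m + 3) * b ∧
      f1 (firstStageCost a b) (scenarioCost₂ a b) (I.disjSum ∅) (2 * m) ≤ (3 * m + 3) * b ∧
      f1 (firstStageCost a b) (scenarioCost₃ b) (I.disjSum ∅) (2 * m) ≤ (3 * m + 3) * b := by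
  have hp : 2 * m ≤ Fintype.card (Fin (2 * m) ⊕ Fin m) := by simp
  have hX : ∑ e ∈ I.disjSum ∅, firstStageCost a b e = 3 * m * b + b := by
    simp only [sum_disjSum, sum_empty, add_zero, firstStageCost, Sum.elim_inl, sum_add_distrib,
      sum_const, hI, nsmul_eq_mul, ← Nat.cast_sum, hIa]
    ring
  have hIc := sum_compl_eq_of_balanced hsum hIa
  have hYsub : Iᶜ.disjSum (∅ : Finset (Fin m)) ⊆ univ \ I.disjSum ∅ := by simp [subset_iff]
  have hYcard :
      #(Iᶜ.disjSum (∅ : Finset (Fin m))) = 2 * m - #(I.disjSum (∅ : Finset (Fin m))) := by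
    simp [card_compl, hI]
  have hscale : (m : ℝ) * (6 * b / (2 * m)) = 3 * b := by
    rcases Nat.eq_zero_or_pos m with rfl | hm
    · simp [← hIa, card_eq_zero.mp hI]
    · field_simp; ring
  refine ⟨(f1_le_iff hp _).2 ⟨Iᶜ.disjSum ∅, hYsub, hYcard, ?_⟩,
    (f1_le_iff hp _).2 ⟨Iᶜ.disjSum ∅, hYsub, hYcard, ?_⟩,
    (f1_le_iff hp _).2
      ⟨(∅ : Finset (Fin (2 * m))).disjSum univ, by simp [subset_iff], ?_, ?_⟩⟩
  · simp only [hX, sum_disjSum, sum_empty, add_zero, scenarioCost₁, Sum.elim_inl, ← mul_sum,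
      hIc]
    linarith
  · simp only [hX, sum_disjSum, sum_empty, add_zero, scenarioCost₂, Sum.elim_inl,
      sum_sub_distrib, sum_const, card_compl, Fintype.card_fin, hI, nsmul_eq_mul, hIc,
      show 2 * m - m = m by omega, hscale]
    linarith
  · simp [hI]
    omega
  · simp only [hX, sum_disjSum, sum_empty, scenarioCost₃, Sum.elim_inr, sum_const_zero,
      add_zero]
    linarith [b.cast_nonneg (α := ℝ)]

theorem pos_of_sum_eq (hsum : ∑ i, a i = 2 * b) (hb : 0 < b) : 0 < m :=
  Nat.pos_of_ne_zero fun hm => by subst hm; simp at hsum; omega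

theorem sum_firstStageCost {X : Finset (Fin (2 * m) ⊕ Fin m)} (hX : X.toRight = ∅) :
    ∑ e ∈ X, firstStageCost a b e = 3 * b * #X.toLeft + ∑ i ∈ X.toLeft, (a i : ℝ) := by
  simp only [sum_sum_eq_sum_toLeft_add_sum_toRight, hX, sum_empty, add_zero, firstStageCost,
    Sum.elim_inl, sum_add_distrib, sum_const, nsmul_eq_mul]
  ring

theorem toRight_eq_empty_and_le_card_of_f1_le (hm : 0 < m) (hb : 0 < b)
    {X : Finset (Fin (2 * m) ⊕ Fin m)}
    (h : f1 (firstStageCost a b) (scenarioCost₃ b) X (2 * m) ≤ (3 * m + 3) * b) :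
    X.toRight = ∅ ∧ m ≤ #X.toLeft := by
  obtain ⟨Y, -, hYcard, hY⟩ := (f1_le_iff (by simp) _).1 h
  have hM : (3 * m + 3) * (b : ℝ) < 4 * (2 * m) * b := by
    have : (1 : ℝ) ≤ m := by exact_mod_cast hm
    have : (0 : ℝ) < b := by exact_mod_cast hb
    nlinarith
  obtain ⟨hX, hcard⟩ := toRight_eq_empty_and_card_le_of_sum_lt (fun i => by positivity)
    (by positivity) (by simpa using hYcard) (hY.trans_lt hM)
  exact ⟨hX, by simpa [two_mul] using hcard⟩

theorem sum_firstStageCost_add_sum_compl_le_of_f1_le (hsum : ∑ i, a i = 2 * b) (hm : 0 < m)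
    (hb : 0 < b) {X : Finset (Fin (2 * m) ⊕ Fin m)} (hX : X.toRight = ∅) (hmX : m ≤ #X.toLeft)
    {g : Fin (2 * m) → ℝ} (hg : ∀ i, -(a i : ℝ) ≤ g i)
    (h : f1 (firstStageCost a b) (Sum.elim g (fun _ => 4 * (2 * m) * b)) X (2 * m) ≤
      (3 * m + 3) * b) :
    3 * b * #X.toLeft + ∑ i ∈ X.toLeft, (a i : ℝ) + ∑ i ∈ X.toLeftᶜ, g i ≤
      (3 * m + 3) * b := by
  obtain ⟨Y, hYsub, hYcard, hY⟩ := (f1_le_iff (by simp) _).1 h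
  rw [sum_firstStageCost hX] at hY
  have hL : ∀ Z : Finset (Fin (2 * m)), -(2 * b : ℝ) ≤ ∑ i ∈ Z, g i := by
    intro Z
    have hZ : ∑ i ∈ Z, (a i : ℝ) ≤ 2 * b := by
      exact_mod_cast hsum ▸ sum_le_sum_of_subset (subset_univ Z)
    linarith [sum_le_sum fun i (_ : i ∈ Z) => hg i,
      sum_neg_distrib (s := Z) (f := fun i => (a i : ℝ))]
  -- The first stage already costs at least `3mb`, leaving at most `3b < M - 2b` for the completion.
  have hlt : ∑ e ∈ Y, Sum.elim g (fun _ => 4 * (2 * m) * b) e < -(2 * b) + 4 * (2 * m) * b := by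
    have : (1 : ℝ) ≤ m := by exact_mod_cast hm
    have : (0 : ℝ) < b := by exact_mod_cast hb
    have : (m : ℝ) ≤ #X.toLeft := by exact_mod_cast hmX
    have : 0 ≤ ∑ i ∈ X.toLeft, (a i : ℝ) := by positivity
    nlinarith
  rwa [sum_elim_eq_sum_compl_of_lt hX hYsub (by simpa using hYcard) (by positivity) hL hlt] at hY

theorem card_eq_and_sum_eq_of_le {k : ℕ} {A : ℝ} (hm : 0 < m) (hb : 0 < b) (hmk : m ≤ k)
    (hA : A ≤ 2 * b)
    (h₁ : 3 * b * k + A + 2 * (2 * b - A) ≤ (3 * m + 3) * b)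
    (h₂ : 3 * b * k + A + ((2 * m - k) * (6 * b / (2 * m)) - (2 * b - A)) ≤ (3 * m + 3) * b) :
    k = m ∧ A = b := by
  have hb' : (0 : ℝ) < b := by exact_mod_cast hb
  have hkm : k = m := by
    have : (k : ℝ) < m + 1 := by nlinarith
    exact le_antisymm (by exact_mod_cast Nat.lt_succ_iff.mp (by exact_mod_cast this)) hmk
  subst hkm
  have hscale : (2 * (k : ℝ) - k) * (6 * b / (2 * k)) = 3 * b := by
    have : (k : ℝ) ≠ 0 := by exact_mod_cast hm.ne'
    field_simp; ring
  exact ⟨rfl, by linarith⟩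

theorem exists_balanced_of_f1_le (hsum : ∑ i, a i = 2 * b) (hb : 0 < b)
    {X : Finset (Fin (2 * m) ⊕ Fin m)}
    (h₁ : f1 (firstStageCost a b) (scenarioCost₁ a b) X (2 * m) ≤ (3 * m + 3) * b)
    (h₂ : f1 (firstStageCost a b) (scenarioCost₂ a b) X (2 * m) ≤ (3 * m + 3) * b)
    (h₃ : f1 (firstStageCost a b) (scenarioCost₃ b) X (2 * m) ≤ (3 * m + 3) * b) :
    ∃ I : Finset (Fin (2 * m)), #I = m ∧ ∑ i ∈ I, a i = b := by
  have hm := pos_of_sum_eq hsum hb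
  obtain ⟨hX, hmX⟩ := toRight_eq_empty_and_le_card_of_f1_le hm hb h₃
  have hsumR : ∑ i ∈ X.toLeftᶜ, (a i : ℝ) = 2 * b - ∑ i ∈ X.toLeft, (a i : ℝ) := by
    have hsumR : ∑ i, (a i : ℝ) = 2 * b := by exact_mod_cast hsum
    linarith [sum_add_sum_compl X.toLeft fun i => (a i : ℝ)]
  have hA : ∑ i ∈ X.toLeft, (a i : ℝ) ≤ 2 * b := by
    linarith [sum_nonneg fun i (_ : i ∈ X.toLeftᶜ) => (a i).cast_nonneg (α := ℝ)]
  have e₁ := sum_firstStageCost_add_sum_compl_le_of_f1_le hsum hm hb hX hmX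
    (g := fun i => 2 * (a i : ℝ)) (fun i => by linarith [(a i).cast_nonneg (α := ℝ)]) h₁
  have e₂ := sum_firstStageCost_add_sum_compl_le_of_f1_le hsum hm hb hX hmX
    (g := fun i => 6 * b / (2 * m) - (a i : ℝ))
    (fun i => by linarith [show (0 : ℝ) ≤ 6 * b / (2 * m) by positivity]) h₂
  rw [← mul_sum, hsumR] at e₁
  rw [sum_sub_distrib, sum_const, hsumR, card_compl, Fintype.card_fin, nsmul_eq_mul,
    Nat.cast_sub (by simpa using card_le_univ X.toLeft), Nat.cast_mul, Nat.cast_ofNat] at e₂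
  obtain ⟨hI, hIa⟩ := card_eq_and_sum_eq_of_le hm hb hmX hA e₁ e₂
  exact ⟨X.toLeft, hI, by exact_mod_cast hIa⟩

end BalancedPartitionReduction

open BalancedPartitionReduction in
theorem balanced_partition_two_stage_reduction_general (m b : ℕ)
    (a : Fin (2 * m) → ℕ) (hsum : ∑ i, a i = 2 * b)
    (M : ℝ) (hM : M = 4 * (2 * m) * b)
    (C c1 c2 c3 : (Fin (2 * m) ⊕ Fin m) → ℝ)
    (hC : C = Sum.elim (fun i => 3 * b + (a i : ℝ)) (fun _ => M))
    (hc1 : c1 = Sum.elim (fun i => 2 * (a i : ℝ)) (fun _ => M))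
    (hc2 : c2 = Sum.elim (fun i => 6 * b / (2 * m) - (a i : ℝ)) (fun _ => M))
    (hc3 : c3 = Sum.elim (fun _ => M) (fun _ => 0)) :
    (∃ I : Finset (Fin (2 * m)), I.card = m ∧ ∑ i ∈ I, a i = b) ↔
      sInf {v : ℝ | ∃ X : Finset (Fin (2 * m) ⊕ Fin m), X.card ≤ 2 * m ∧
          v = max (f1 C c1 X (2 * m))
                (max (f1 C c2 X (2 * m)) (f1 C c3 X (2 * m)))} ≤
        (3 * m + 3) * b := by
  subst hM hC hc1 hc2 hc3
  rw [sInf_setOf_le_iff ⟨∅, by simp⟩]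
  simp only [max_le_iff]
  constructor
  · rintro ⟨I, hI, hIa⟩
    exact ⟨I.disjSum ∅, by simp [hI]; omega, f1_le_of_balanced hsum hI hIa⟩
  · rintro ⟨X, -, h₁, h₂, h₃⟩
    rcases Nat.eq_zero_or_pos b with rfl | hb
    · obtain ⟨I, -, hI⟩ := exists_subset_card_eq (s := (univ : Finset (Fin (2 * m)))) (n := m)
        (by simp; omega)
      exact ⟨I, hI, sum_eq_zero fun i _ => sum_eq_zero_iff.mp hsum i (mem_univ i)⟩
    · exact exists_balanced_of_f1_le hsum hb h₁ h₂ h₃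

theorem balanced_partition_two_stage_reduction (m b : ℕ) (hm : 1 ≤ m)
    (a : Fin (2 * m) → ℕ) (ha : ∀ i, 0 < a i) (hsum : ∑ i, a i = 2 * b)
    (M : ℝ) (hM : M = 4 * (2 * m) * b)
    (C c1 c2 c3 : (Fin (2 * m) ⊕ Fin m) → ℝ)
    (hC : C = Sum.elim (fun i => 3 * b + (a i : ℝ)) (fun _ => M))
    (hc1 : c1 = Sum.elim (fun i => 2 * (a i : ℝ)) (fun _ => M))
    (hc2 : c2 = Sum.elim (fun i => 6 * b / (2 * m) - (a i : ℝ)) (fun _ => M))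
    (hc3 : c3 = Sum.elim (fun _ => M) (fun _ => 0)) :
    (∃ I : Finset (Fin (2 * m)), I.card = m ∧ ∑ i ∈ I, a i = b) ↔
      sInf {v : ℝ | ∃ X : Finset (Fin (2 * m) ⊕ Fin m), X.card ≤ 2 * m ∧
          v = max (f1 C c1 X (2 * m))
                (max (f1 C c2 X (2 * m)) (f1 C c3 X (2 * m)))} ≤
        (3 * m + 3) * b :=
  balanced_partition_two_stage_reduction_general m b a hsum M hM C c1 c2 c3 hC hc1 hc2 hc3
end

section
/- In the Balanced-Partition reduction above, any first-stage solution X with max_S f₁(X,S) ≤ (3n/2 + 3)b must satisfy |X| = n/2 and X ⊆ {e_1,…,e_n}; moreover, writing b₁ = ∑_{e_i∈X} a_i, one has f₁(X,S1) = (3n/2)b + 4b − b₁ and f₁(X,S2) = (3n/2)b + b + 2b₁, and max{4b − b₁, b + 2b₁} ≤ 3b if and only if b₁ = b. -/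
open Finset

/-!
Every item `e_i` costs at least `3b + 1` in the first stage and every `f_j` costs `M`, which
exceeds the budget `(3m + 3)b`. Since the completion cost under S1 is nonnegative, `X` contains
no `f_j` and at most `m` items `e_i`. Under S3 only the `m` items `f_j` are free, so a first stage
of fewer than `m` items forces a completion containing some `e_i` at price `M`. Once `X` consists
of exactly `m` items `e_i`, a completion containing some `f_j` pays `M` for it, so the cheapest
completion under S1 and S2 is formed by the remaining `e_i`; this gives the two closed forms.
-/

section CompletionCost

variable {ι : Type*} [Fintype ι] [DecidableEq ι] {C c : ι → ℝ} {X Y : Finset ι} {p : ℕ}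

theorem complMin_le_sum (hY : Y ⊆ univ \ X) (hcard : #Y = p - #X) :
    complMin c X p ≤ ∑ e ∈ Y, c e := by
  refine csInf_le ?_ ⟨Y, hY, hcard, rfl⟩
  refine ((Set.finite_range fun Y : Finset ι => ∑ e ∈ Y, c e).subset ?_).bddBelow
  rintro v ⟨Y, -, -, rfl⟩
  exact ⟨Y, rfl⟩

theorem le_complMin {q : ℝ} (hp : p - #X ≤ #(univ \ X))
    (h : ∀ Y ⊆ univ \ X, #Y = p - #X → q ≤ ∑ e ∈ Y, c e) : q ≤ complMin c X p := by
  obtain ⟨Y, hY, hcard⟩ := exists_subset_card_eq hp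
  exact le_csInf ⟨_, Y, hY, hcard, rfl⟩ fun v ⟨Y, hY, hcard, hv⟩ => hv ▸ h Y hY hcard

/-- No feasibility assumption is needed: an empty set of completions has infimum `0`. -/
theorem complMin_nonneg (hc : ∀ e, 0 ≤ c e) : 0 ≤ complMin c X p :=
  Real.sInf_nonneg (by rintro v ⟨Y, -, -, rfl⟩; exact sum_nonneg fun e _ => hc e)

theorem sum_le_f1 (hc : ∀ e, 0 ≤ c e) : ∑ e ∈ X, C e ≤ f1 C c X p :=
  le_add_of_nonneg_right (complMin_nonneg hc)

theorem complMin_le_f1 (hC : ∀ e, 0 ≤ C e) : complMin c X p ≤ f1 C c X p :=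
  le_add_of_nonneg_left (sum_nonneg fun e _ => hC e)

end CompletionCost

section SumType

variable {α β : Type*} {X : Finset (α ⊕ β)}

theorem sum_elim_of_toRight_eq_empty (hX : X.toRight = ∅) (f : α → ℝ) (g : β → ℝ) :
    ∑ e ∈ X, Sum.elim f g e = ∑ i ∈ X.toLeft, f i := by
  simp [sum_sum_eq_sum_toLeft_add_sum_toRight, hX]

theorem card_toLeft_of_toRight_eq_empty (hX : X.toRight = ∅) : #X.toLeft = #X := by
  simpa [hX] using card_toLeft_add_card_toRight (u := X)

variable [Fintype α] [Fintype β] [DecidableEq α] [DecidableEq β] {p : ℕ} {M : ℝ}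

/-- A completion using a right item pays `M` for it, which `hg` makes at least as expensive
as completing by all the remaining left items. -/
theorem complMin_elim_const_eq_sum_compl {g : α → ℝ} (hX : X.toRight = ∅) (hM : 0 ≤ M)
    (hg : ∀ T : Finset α, ∑ i ∈ X.toLeftᶜ, g i ≤ M + ∑ i ∈ T, g i) :
    complMin (Sum.elim g fun _ : β => M) X (Fintype.card α) = ∑ i ∈ X.toLeftᶜ, g i := by
  have hcard : #X.toLeftᶜ = Fintype.card α - #X := by
    rw [card_compl, card_toLeft_of_toRight_eq_empty hX]
  refine le_antisymm ?_ (le_complMin ?_ fun Y hY hYcard => ?_)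
  · calc _ ≤ ∑ e ∈ X.toLeftᶜ.map .inl, Sum.elim g (fun _ : β => M) e :=
          complMin_le_sum (fun e he => ?_) (by rw [card_map, hcard])
      _ = _ := by rw [sum_map]; rfl
    obtain ⟨i, hi, rfl⟩ := mem_map.1 he
    simpa using hi
  · rw [card_univ_sdiff, Fintype.card_sum]
    omega
  rw [sum_sum_eq_sum_toLeft_add_sum_toRight]
  simp only [Sum.elim_inl, Sum.elim_inr, sum_const, nsmul_eq_mul]
  have hYcard' := card_toLeft_add_card_toRight (u := Y)
  rcases (#Y.toRight).eq_zero_or_pos with hright | hright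
  · have hleft : Y.toLeft = X.toLeftᶜ := by
      refine eq_of_subset_of_card_le (fun i hi => ?_) (by omega)
      simpa using (mem_sdiff.1 (hY (mem_toLeft.1 hi))).2
    simp [hleft, hright]
  · have : (1 : ℝ) ≤ #Y.toRight := by exact_mod_cast hright
    nlinarith [hg Y.toLeft]

theorem le_complMin_elim_zero (hM : 0 ≤ M) (hp : p - #X ≤ #(univ \ X))
    (hβ : Fintype.card β < p - #X) :
    M ≤ complMin (Sum.elim (fun _ : α => M) fun _ : β => 0) X p := by
  refine le_complMin hp fun Y _ hY => ?_
  have hleft : 1 ≤ #Y.toLeft := by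
    have := card_toLeft_add_card_toRight (u := Y)
    have := card_le_univ Y.toRight
    omega
  rw [sum_sum_eq_sum_toLeft_add_sum_toRight]
  simp only [Sum.elim_inl, Sum.elim_inr, sum_const, nsmul_eq_mul]
  have : (1 : ℝ) ≤ #Y.toLeft := by exact_mod_cast hleft
  nlinarith

theorem f1_elim_const_eq {F g : α → ℝ} {M' : ℝ} (hX : X.toRight = ∅) (hM : 0 ≤ M)
    (hg : ∀ T : Finset α, ∑ i ∈ X.toLeftᶜ, g i ≤ M + ∑ i ∈ T, g i) :
    f1 (Sum.elim F fun _ : β => M') (Sum.elim g fun _ : β => M) X (Fintype.card α) =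
      ∑ i ∈ X.toLeft, F i + ∑ i ∈ X.toLeftᶜ, g i := by
  rw [f1, sum_elim_of_toRight_eq_empty hX, complMin_elim_const_eq_sum_compl hX hM hg]

end SumType

section BalancedPartition

variable {m b : ℕ} {a : Fin (2 * m) → ℕ} {M : ℝ} {X : Finset (Fin (2 * m) ⊕ Fin m)}

theorem card_eq_and_toRight_eq_empty_of_f1_le {c : Fin (2 * m) ⊕ Fin m → ℝ}
    (ha : ∀ i, 0 < a i) (hM : (3 * m + 3) * b < M) (hc : ∀ e, 0 ≤ c e)
    (h1 : f1 (Sum.elim (fun i => 3 * b + (a i : ℝ)) fun _ => M) c X (2 * m) ≤ (3 * m + 3) * b)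
    (h3 : f1 (Sum.elim (fun i => 3 * b + (a i : ℝ)) fun _ => M)
      (Sum.elim (fun _ => M) fun _ => 0) X (2 * m) ≤ (3 * m + 3) * b) :
    #X = m ∧ X.toRight = ∅ := by
  set C : Fin (2 * m) ⊕ Fin m → ℝ := Sum.elim (fun i => 3 * b + (a i : ℝ)) fun _ => M
  have hM0 : 0 ≤ M := (lt_of_le_of_lt (by positivity) hM).le
  have hC : ∀ e, 0 ≤ C e := by
    rintro (i | j) <;> simp only [C, Sum.elim_inl, Sum.elim_inr] <;> positivity
  have hCX : ∑ e ∈ X, C e ≤ (3 * m + 3) * b := (sum_le_f1 hc).trans h1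
  have hright : X.toRight = ∅ := by
    refine eq_empty_of_forall_notMem fun j hj => ?_
    have := single_le_sum (fun e _ => hC e) (mem_toRight.1 hj)
    simp only [C, Sum.elim_inr] at this
    linarith
  have hle : #X ≤ m := by
    have hCX' : ∀ e ∈ X, 3 * b + 1 ≤ C e := by
      rintro (i | j) he
      · have : (1 : ℝ) ≤ a i := by exact_mod_cast ha i
        simp [C, this]
      · simp [← mem_toRight, hright] at he
    by_contra! hlt
    have hlt' : (m : ℝ) + 1 ≤ #X := by exact_mod_cast hlt
    have := card_nsmul_le_sum X C _ hCX'
    rw [nsmul_eq_mul] at this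
    nlinarith
  refine ⟨le_antisymm hle (not_lt.1 fun hlt => ?_), hright⟩
  have hp : 2 * m - #X ≤ #(univ \ X) := by
    rw [card_univ_sdiff, Fintype.card_sum, Fintype.card_fin, Fintype.card_fin]
    omega
  have := (le_complMin_elim_zero hM0 hp (by rw [Fintype.card_fin]; omega)).trans
    (complMin_le_f1 hC)
  linarith

theorem f1_S1_eq (hsum : ∑ i, a i = 2 * b) (hM : 4 * b ≤ M) (hX : X.toRight = ∅)
    (hcard : #X = m) :
    f1 (Sum.elim (fun i => 3 * b + (a i : ℝ)) fun _ => M)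
      (Sum.elim (fun i => 2 * (a i : ℝ)) fun _ => M) X (2 * m) =
      3 * m * b + 4 * b - ∑ i ∈ X.toLeft, (a i : ℝ) := by
  have hsumR : ∑ i, (a i : ℝ) = 2 * b := by exact_mod_cast hsum
  have hcompl := sum_compl_add_sum X.toLeft fun i => (a i : ℝ)
  have hT : ∀ T : Finset (Fin (2 * m)), 0 ≤ ∑ i ∈ T, (a i : ℝ) := fun T => by positivity
  have := f1_elim_const_eq (M' := M) (F := fun i => 3 * b + (a i : ℝ))
    (g := fun i => 2 * (a i : ℝ)) hX ((by positivity : (0 : ℝ) ≤ 4 * b).trans hM)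
    (fun T => by simp only [← mul_sum]; linarith [hT T, hT X.toLeft])
  rw [Fintype.card_fin] at this
  rw [this, sum_add_distrib, sum_const, card_toLeft_of_toRight_eq_empty hX, hcard, ← mul_sum]
  simp only [nsmul_eq_mul]
  linarith

theorem f1_S2_eq (hm : m ≠ 0) (hsum : ∑ i, a i = 2 * b) (hM : 5 * b ≤ M)
    (hX : X.toRight = ∅) (hcard : #X = m) :
    f1 (Sum.elim (fun i => 3 * b + (a i : ℝ)) fun _ => M)
      (Sum.elim (fun i => 6 * b / (2 * m) - (a i : ℝ)) fun _ => M) X (2 * m) =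
      3 * m * b + b + 2 * ∑ i ∈ X.toLeft, (a i : ℝ) := by
  have hsumR : ∑ i, (a i : ℝ) = 2 * b := by exact_mod_cast hsum
  have hcompl := sum_compl_add_sum X.toLeft fun i => (a i : ℝ)
  have hleft : #X.toLeft = m := (card_toLeft_of_toRight_eq_empty hX).trans hcard
  have hcard_compl : (#X.toLeftᶜ : ℝ) = m := by
    rw [card_compl, Fintype.card_fin, hleft]
    push_cast [show m ≤ 2 * m by omega]
    ring
  have hm' : (m : ℝ) ≠ 0 := by exact_mod_cast hm
  have hshare : (m : ℝ) * (6 * b / (2 * m)) = 3 * b := by field_simp; ring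
  have hcompl_cost : ∑ i ∈ X.toLeftᶜ, (6 * b / (2 * m) - (a i : ℝ)) =
      b + ∑ i ∈ X.toLeft, (a i : ℝ) := by
    rw [sum_sub_distrib, sum_const, nsmul_eq_mul, hcard_compl, hshare]
    linarith
  have hcost (T : Finset (Fin (2 * m))) :
      -(2 * b) ≤ ∑ i ∈ T, (6 * b / (2 * m) - (a i : ℝ)) := by
    rw [sum_sub_distrib]
    have : ∑ i ∈ T, (a i : ℝ) ≤ 2 * b :=
      hsumR ▸ sum_le_univ_sum_of_nonneg fun i => by positivity
    have : 0 ≤ ∑ i ∈ T, 6 * (b : ℝ) / (2 * m) := by positivity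
    linarith
  have hrest : 0 ≤ ∑ i ∈ X.toLeftᶜ, (a i : ℝ) := by positivity
  have := f1_elim_const_eq (M' := M) (F := fun i => 3 * b + (a i : ℝ)) hX
    ((by positivity : (0 : ℝ) ≤ 5 * b).trans hM) (fun T => by linarith [hcost T])
  rw [Fintype.card_fin] at this
  rw [this, sum_add_distrib, sum_const, hleft, hcompl_cost]
  simp only [nsmul_eq_mul]
  linarith

end BalancedPartition

theorem max_le_three_mul_iff {b b₁ : ℝ} :
    max (4 * b - b₁) (b + 2 * b₁) ≤ 3 * b ↔ b₁ = b := by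
  rw [max_le_iff]
  constructor
  · rintro ⟨h₁, h₂⟩
    linarith
  · rintro rfl
    constructor <;> linarith

theorem balanced_partition_two_stage_structure (m b : ℕ) (hm : 1 ≤ m)
    (a : Fin (2 * m) → ℕ) (ha : ∀ i, 0 < a i) (hsum : ∑ i, a i = 2 * b)
    (M : ℝ) (hM : M = 4 * (2 * m) * b)
    (C c1 c2 c3 : (Fin (2 * m) ⊕ Fin m) → ℝ)
    (hC : C = Sum.elim (fun i => 3 * b + (a i : ℝ)) (fun _ => M))
    (hc1 : c1 = Sum.elim (fun i => 2 * (a i : ℝ)) (fun _ => M))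
    (hc2 : c2 = Sum.elim (fun i => 6 * b / (2 * m) - (a i : ℝ)) (fun _ => M))
    (hc3 : c3 = Sum.elim (fun _ => M) (fun _ => 0)) :
    (∀ X : Finset (Fin (2 * m) ⊕ Fin m), X.card ≤ 2 * m →
      max (f1 C c1 X (2 * m)) (max (f1 C c2 X (2 * m)) (f1 C c3 X (2 * m))) ≤
        (3 * m + 3) * b →
      X.card = m ∧ (∀ j : Fin m, Sum.inr j ∉ X) ∧
      f1 C c1 X (2 * m) =
        3 * m * b + 4 * b -
          ∑ i ∈ Finset.univ.filter (fun i => Sum.inl i ∈ X), (a i : ℝ) ∧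
      f1 C c2 X (2 * m) =
        3 * m * b + b +
          2 * ∑ i ∈ Finset.univ.filter (fun i => Sum.inl i ∈ X), (a i : ℝ)) ∧
    (∀ b₁ : ℝ, max (4 * b - b₁) (b + 2 * b₁) ≤ 3 * b ↔ b₁ = b) := by
  subst hM hC hc1 hc2 hc3
  refine ⟨fun X _ hX => ?_, fun _ => max_le_three_mul_iff⟩
  obtain ⟨h1, -, h3⟩ : _ ∧ _ ∧ _ := by simpa only [max_le_iff] using hX
  have hb : (1 : ℝ) ≤ b := by
    have : 0 < ∑ i, a i := sum_pos (fun i _ => ha i) ⟨⟨0, by omega⟩, mem_univ _⟩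
    exact_mod_cast (show 1 ≤ b by omega)
  have hm' : (1 : ℝ) ≤ m := by exact_mod_cast hm
  obtain ⟨hcard, hX⟩ := card_eq_and_toRight_eq_empty_of_f1_le ha (by nlinarith)
    (by rintro (i | j) <;> simp only [Sum.elim_inl, Sum.elim_inr] <;> positivity) h1 h3
  have hfilter : univ.filter (fun i => Sum.inl i ∈ X) = X.toLeft := by ext; simp
  rw [hfilter]
  refine ⟨hcard, fun j hj => ?_, f1_S1_eq hsum (by nlinarith) hX hcard,
    f1_S2_eq (by omega) hsum (by nlinarith) hX hcard⟩
  simpa [hX] using mem_toRight.2 hj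
end

section
/- In the Min-Set-Cover reduction, for a first-stage solution X consisting of items e_A for A ∈ D with |D| = k₁ < M, the cost f₁(X, S_i) equals k₁ if element i is covered by D (some A ∈ D contains i), and f₁(X, S_i) ≥ M otherwise. Hence the optimal worst-case cost of the constructed Two-Stage Selection instance equals the minimum size of a set cover. -/
open Finset

lemma feas_nonempty {ι : Type*} [Fintype ι] [DecidableEq ι] (c : ι → ℝ) (X : Finset ι) (p : ℕ)
    (h : p - X.card ≤ (univ \ X).card) :
    {v : ℝ | ∃ Y ⊆ Finset.univ \ X, Y.card = p - X.card ∧ v = ∑ e ∈ Y, c e}.Nonempty := by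
  obtain ⟨Y, hY, hYc⟩ := Finset.exists_subset_card_eq h
  exact ⟨_, Y, hY, hYc, rfl⟩

lemma le_complMin_s17 {ι : Type*} [Fintype ι] [DecidableEq ι] (c : ι → ℝ) (X : Finset ι) (p : ℕ)
    (h : p - X.card ≤ (univ \ X).card) (b : ℝ)
    (hb : ∀ Y ⊆ Finset.univ \ X, Y.card = p - X.card → b ≤ ∑ e ∈ Y, c e) :
    b ≤ complMin c X p := by
  refine le_csInf (feas_nonempty c X p h) ?_
  rintro v ⟨Y, h1, h2, rfl⟩
  exact hb Y h1 h2

lemma complMin_le {ι : Type*} [Fintype ι] [DecidableEq ι] (c : ι → ℝ) (hc0 : ∀ e, 0 ≤ c e)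
    (X : Finset ι) (p : ℕ) (Y : Finset ι) (hY : Y ⊆ Finset.univ \ X)
    (hcard : Y.card = p - X.card) :
    complMin c X p ≤ ∑ e ∈ Y, c e := by
  refine csInf_le ⟨0, ?_⟩ ⟨Y, hY, hcard, rfl⟩
  rintro v ⟨Y', _, _, rfl⟩
  exact Finset.sum_nonneg fun e _ => hc0 e

lemma scenario_Z (U : Type*) [Fintype U] [DecidableEq U] (m : ℕ) (A : Fin m → Finset U)
    (M : ℝ) (i : U) (c : (Fin m ⊕ Fin m) → ℝ)
    (hc : c = Sum.elim (fun j => if i ∈ A j then M else 0)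
      (fun j : Fin m => if (j : ℕ) < (Finset.univ.filter (fun j' => i ∈ A j')).card
        then 0 else M)) :
    ∃ Z : Finset (Fin m ⊕ Fin m), Z.card = m ∧ (∀ e ∈ Z, c e = 0) ∧ (∀ e ∉ Z, c e = M)
      ∧ (∀ j : Fin m, Sum.inl j ∈ Z ↔ i ∉ A j) := by
  set r := (Finset.univ.filter (fun j' => i ∈ A j')).card with hr
  have hrm : r ≤ m := by
    have := Finset.card_filter_le (univ : Finset (Fin m)) (fun j' => i ∈ A j')
    simpa using this
  have hfc : (univ.filter fun j : Fin m => (j:ℕ) < r).card = r := by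
    have : (univ.filter fun j : Fin m => (j:ℕ) < r) = Finset.map (Fin.castLEEmb hrm) univ := by
      ext j
      simp [Fin.castLEEmb]
      constructor
      · intro h; exact ⟨⟨j, h⟩, rfl⟩
      · rintro ⟨a, rfl⟩; exact a.2
    simp [this]
  have hfc2 : (univ.filter fun j : Fin m => i ∉ A j).card = m - r := by
    have := Finset.card_filter_add_card_filter_not
      (s := (univ : Finset (Fin m))) (p := fun j => i ∈ A j)
    simp only [card_univ, Fintype.card_fin] at this
    omega
  refine ⟨(univ.filter fun j => i ∉ A j).image Sum.inl
    ∪ (univ.filter fun j : Fin m => (j:ℕ) < r).image Sum.inr, ?_, ?_, ?_, ?_⟩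
  · rw [Finset.card_union_of_disjoint (by simp [Finset.disjoint_left]),
      Finset.card_image_of_injective _ Sum.inl_injective,
      Finset.card_image_of_injective _ Sum.inr_injective, hfc, hfc2]
    omega
  · rintro (j | j) he <;> simp at he <;> simp [hc, he]
  · rintro (j | j) he <;> simp at he <;> simp [hc, he]
  · intro j; simp

theorem set_cover_two_stage_cost_characterization (U : Type*) [Fintype U]
    [DecidableEq U] [Nonempty U] (m : ℕ) (hm : 1 ≤ m) (A : Fin m → Finset U)
    (hcover : ∀ i : U, ∃ j, i ∈ A j)
    (M : ℝ) (hM : M = (Fintype.card U) * m)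
    (C : (Fin m ⊕ Fin m) → ℝ) (hC : C = Sum.elim (fun _ => 1) (fun _ => M))
    (c : U → (Fin m ⊕ Fin m) → ℝ)
    (hc : c = fun i => Sum.elim (fun j => if i ∈ A j then M else 0)
      (fun j : Fin m => if (j : ℕ) < (Finset.univ.filter (fun j' => i ∈ A j')).card
        then 0 else M)) :
    (∀ D : Finset (Fin m), (D.card : ℝ) < M →
      ∀ i : U,
        ((∃ j ∈ D, i ∈ A j) →
          f1 C (c i) (D.image Sum.inl) (m + 1) = (D.card : ℝ)) ∧
        ((¬ ∃ j ∈ D, i ∈ A j) →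
          M ≤ f1 C (c i) (D.image Sum.inl) (m + 1))) ∧
    sInf {v : ℝ | ∃ X : Finset (Fin m ⊕ Fin m), X.card ≤ m + 1 ∧
        v = Finset.univ.sup' Finset.univ_nonempty
          (fun i : U => f1 C (c i) X (m + 1))} =
      sInf {v : ℝ | ∃ D : Finset (Fin m), (∀ i : U, ∃ j ∈ D, i ∈ A j) ∧
        v = (D.card : ℝ)} := by
  -- basic numeric facts
  have hU : (1:ℝ) ≤ Fintype.card U := by exact_mod_cast Fintype.card_pos
  have hM0 : 0 < M := by
    rw [hM]
    exact mul_pos (by exact_mod_cast Fintype.card_pos) (by exact_mod_cast hm)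
  have hMm : (m:ℝ) ≤ M := by rw [hM]; nlinarith
  have hC0 : ∀ e, 0 ≤ C e := by rintro (j | j) <;> simp [hC] <;> linarith
  have hc0 : ∀ (i : U) e, 0 ≤ c i e := by
    rintro i (j | j) <;> simp only [hc, Sum.elim_inl, Sum.elim_inr] <;> split <;> linarith
  have hcardX : ∀ D : Finset (Fin m), (D.image Sum.inl).card = D.card :=
    fun D => Finset.card_image_of_injective D
      (Sum.inl_injective : Function.Injective (Sum.inl : Fin m → Fin m ⊕ Fin m))
  have hDm : ∀ D : Finset (Fin m), D.card ≤ m := by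
    intro D
    simpa using D.card_le_univ
  have hfeas : ∀ X : Finset (Fin m ⊕ Fin m), X.card ≤ m + 1 →
      (m + 1) - X.card ≤ (univ \ X).card := by
    intro X hX
    rw [Finset.card_sdiff_of_subset (Finset.subset_univ X), card_univ, Fintype.card_sum, Fintype.card_fin]
    omega
  have hsumC : ∀ D : Finset (Fin m), ∑ e ∈ D.image Sum.inl, C e = (D.card : ℝ) := by
    intro D
    rw [Finset.sum_image (f := C) (g := Sum.inl) (fun _ _ _ _ h => Sum.inl_injective h)]
    simp [hC]
  -- key fact 1 : covered scenario
  have key1 : ∀ (D : Finset (Fin m)) (i : U), (∃ j ∈ D, i ∈ A j) →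
      f1 C (c i) (D.image Sum.inl) (m + 1) = (D.card : ℝ) := by
    rintro D i ⟨j₀, hj₀D, hj₀⟩
    obtain ⟨Z, hZcard, hZ0, hZM, hZinl⟩ := scenario_Z U m A M i (c i) (by rw [hc])
    set X := D.image (Sum.inl : Fin m → Fin m ⊕ Fin m) with hX
    have hXc : X.card = D.card := hcardX D
    have hj₀X : Sum.inl j₀ ∈ X := Finset.mem_image_of_mem _ hj₀D
    have hj₀Z : Sum.inl j₀ ∉ Z := by rw [hZinl]; simpa using hj₀
    have hD1 : 1 ≤ D.card := Finset.card_pos.mpr ⟨j₀, hj₀D⟩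
    have h1 : (Z ∩ X).card ≤ D.card - 1 := by
      have hsub : Z ∩ X ⊆ X.erase (Sum.inl j₀) := by
        intro e he
        rw [Finset.mem_erase]
        rcases Finset.mem_inter.mp he with ⟨heZ, heX⟩
        exact ⟨fun h => hj₀Z (h ▸ heZ), heX⟩
      calc (Z ∩ X).card ≤ (X.erase (Sum.inl j₀)).card := Finset.card_le_card hsub
        _ = X.card - 1 := Finset.card_erase_of_mem hj₀X
        _ = D.card - 1 := by rw [hXc]
    have h2 : (m + 1) - X.card ≤ (Z \ X).card := by
      have h3 := Finset.card_sdiff_add_card_inter Z X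
      have h4 := hDm D
      omega
    obtain ⟨Y, hYsub, hYcard⟩ := Finset.exists_subset_card_eq h2
    have hYuniv : Y ⊆ univ \ X :=
      hYsub.trans (Finset.sdiff_subset_sdiff (Finset.subset_univ Z) Finset.Subset.rfl)
    have hcm : complMin (c i) X (m + 1) = 0 := by
      apply le_antisymm
      · have h5 := complMin_le (c i) (hc0 i) X (m + 1) Y hYuniv hYcard
        have h6 : ∑ e ∈ Y, c i e = 0 :=
          Finset.sum_eq_zero fun e he => hZ0 e (Finset.mem_sdiff.mp (hYsub he)).1
        linarith
      · refine le_complMin_s17 (c i) X (m + 1) (hfeas X (by have := hDm D; omega)) 0 ?_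
        intro Y' _ _
        exact Finset.sum_nonneg fun e _ => hc0 i e
    rw [f1, hcm, add_zero, hsumC]
  -- key fact 2 : uncovered scenario
  have key2 : ∀ (D : Finset (Fin m)) (i : U), (¬ ∃ j ∈ D, i ∈ A j) →
      M ≤ complMin (c i) (D.image Sum.inl) (m + 1) := by
    intro D i hni
    obtain ⟨Z, hZcard, hZ0, hZM, hZinl⟩ := scenario_Z U m A M i (c i) (by rw [hc])
    set X := D.image (Sum.inl : Fin m → Fin m ⊕ Fin m) with hX
    have hXc : X.card = D.card := hcardX D
    have hXsub : X ⊆ Z := by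
      intro e he
      obtain ⟨j, hjD, rfl⟩ := Finset.mem_image.mp he
      rw [hZinl]
      exact fun h => hni ⟨j, hjD, h⟩
    refine le_complMin_s17 (c i) X (m + 1) (hfeas X (by have := hDm D; omega)) M ?_
    intro Y hYuniv hYcard
    by_cases hall : ∀ e ∈ Y, c i e = 0
    · exfalso
      have hYZ : Y ⊆ Z \ X := by
        intro e he
        rw [Finset.mem_sdiff]
        refine ⟨?_, (Finset.mem_sdiff.mp (hYuniv he)).2⟩
        by_contra hne
        exact hM0.ne' ((hall e he) ▸ hZM e hne).symm
      have h5 : Y.card ≤ (Z \ X).card := Finset.card_le_card hYZ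
      rw [Finset.card_sdiff_of_subset hXsub, hZcard, hXc] at h5
      have h6 := hDm D
      rw [hXc] at hYcard
      omega
    · push_neg at hall
      obtain ⟨e₀, he₀Y, he₀⟩ := hall
      have he₀M : c i e₀ = M := by
        by_cases h : e₀ ∈ Z
        · exact absurd (hZ0 e₀ h) he₀
        · exact hZM e₀ h
      calc M = c i e₀ := he₀M.symm
        _ ≤ ∑ e ∈ Y, c i e := Finset.single_le_sum (fun e _ => hc0 i e) he₀Y
  constructor
  · intro D _ i
    constructor
    · exact key1 D i
    · intro hni
      have h1 := key2 D i hni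
      have h2 : (0:ℝ) ≤ ∑ e ∈ D.image Sum.inl, C e := Finset.sum_nonneg fun e _ => hC0 e
      rw [f1]
      linarith
  · -- the sInf equality
    set LHS := {v : ℝ | ∃ X : Finset (Fin m ⊕ Fin m), X.card ≤ m + 1 ∧
        v = Finset.univ.sup' Finset.univ_nonempty (fun i : U => f1 C (c i) X (m + 1))}
    set RHS := {v : ℝ | ∃ D : Finset (Fin m), (∀ i : U, ∃ j ∈ D, i ∈ A j) ∧ v = (D.card : ℝ)}
    have hRne : RHS.Nonempty := by
      refine ⟨((univ : Finset (Fin m)).card : ℝ), univ, fun i => ?_, rfl⟩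
      obtain ⟨j, hj⟩ := hcover i
      exact ⟨j, Finset.mem_univ j, hj⟩
    have hRbdd : BddBelow RHS := by
      refine ⟨0, ?_⟩
      rintro v ⟨D, _, rfl⟩
      positivity
    have hsub : RHS ⊆ LHS := by
      rintro v ⟨D, hD, rfl⟩
      refine ⟨D.image Sum.inl, by rw [hcardX]; have := hDm D; omega, ?_⟩
      have heq : (fun i : U => f1 C (c i) (D.image Sum.inl) (m + 1)) =
          fun _ : U => (D.card : ℝ) := funext fun i => key1 D i (hD i)
      rw [heq, Finset.sup'_const]
    have hLne : LHS.Nonempty := hRne.mono hsub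
    have hLbdd : BddBelow LHS := by
      refine ⟨0, ?_⟩
      rintro v ⟨X, hXc, rfl⟩
      have i₀ := Classical.arbitrary U
      have h1 : (0:ℝ) ≤ f1 C (c i₀) X (m + 1) := by
        rw [f1]
        have h2 : (0:ℝ) ≤ ∑ e ∈ X, C e := Finset.sum_nonneg fun e _ => hC0 e
        have h3 : (0:ℝ) ≤ complMin (c i₀) X (m + 1) := by
          refine le_complMin_s17 (c i₀) X (m + 1) (hfeas X hXc) 0 ?_
          intro Y _ _
          exact Finset.sum_nonneg fun e _ => hc0 i₀ e
        linarith
      exact h1.trans (Finset.le_sup' (fun i : U => f1 C (c i) X (m + 1)) (Finset.mem_univ i₀))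
    apply le_antisymm
    · exact csInf_le_csInf hLbdd hRne hsub
    · refine le_csInf hLne ?_
      rintro v ⟨X, hXcard, rfl⟩
      set D := univ.filter fun j : Fin m => Sum.inl j ∈ X with hD
      by_cases hcovD : ∀ i : U, ∃ j ∈ D, i ∈ A j
      · have h1 : sInf RHS ≤ (D.card : ℝ) := csInf_le hRbdd ⟨D, hcovD, rfl⟩
        have i₀ := Classical.arbitrary U
        have hDX : D.image Sum.inl ⊆ X := by
          intro e he
          obtain ⟨j, hjD, rfl⟩ := Finset.mem_image.mp he
          exact (Finset.mem_filter.mp hjD).2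
        have h2 : (D.card : ℝ) ≤ ∑ e ∈ X, C e := by
          rw [← hsumC D]
          exact Finset.sum_le_sum_of_subset_of_nonneg hDX fun e _ _ => hC0 e
        have h3 : (0:ℝ) ≤ complMin (c i₀) X (m + 1) := by
          refine le_complMin_s17 (c i₀) X (m + 1) (hfeas X hXcard) 0 ?_
          intro Y _ _
          exact Finset.sum_nonneg fun e _ => hc0 i₀ e
        have h4 : (D.card : ℝ) ≤ f1 C (c i₀) X (m + 1) := by rw [f1]; linarith
        exact h1.trans (h4.trans (Finset.le_sup' (fun i : U => f1 C (c i) X (m + 1)) (Finset.mem_univ i₀)))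
      · push_neg at hcovD
        obtain ⟨i₀, hi₀⟩ := hcovD
        have hni : ¬ ∃ j ∈ D, i₀ ∈ A j := by
          rintro ⟨j, hjD, hj⟩
          exact hi₀ j hjD hj
        have h1 : sInf RHS ≤ (m : ℝ) := by
          have : ((univ : Finset (Fin m)).card : ℝ) = (m : ℝ) := by
            rw [card_univ, Fintype.card_fin]
          refine (csInf_le hRbdd ⟨univ, fun i => ?_, rfl⟩).trans this.le
          obtain ⟨j, hj⟩ := hcover i
          exact ⟨j, Finset.mem_univ j, hj⟩
        have h2 : M ≤ f1 C (c i₀) X (m + 1) := by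
          by_cases hinr : ∃ j : Fin m, Sum.inr j ∈ X
          · obtain ⟨j, hj⟩ := hinr
            have h3 : M ≤ ∑ e ∈ X, C e := by
              have h4 : C (Sum.inr j) ≤ ∑ e ∈ X, C e :=
                Finset.single_le_sum (fun e _ => hC0 e) hj
              simpa [hC] using h4
            have h5 : (0:ℝ) ≤ complMin (c i₀) X (m + 1) := by
              refine le_complMin_s17 (c i₀) X (m + 1) (hfeas X hXcard) 0 ?_
              intro Y _ _
              exact Finset.sum_nonneg fun e _ => hc0 i₀ e
            rw [f1]; linarith
          · push_neg at hinr
            have hXD : X = D.image Sum.inl := by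
              ext e
              rcases e with j | j
              · simp [hD]
              · simp [hinr j]
            have h6 : M ≤ complMin (c i₀) X (m + 1) := by
              rw [hXD]; exact key2 D i₀ hni
            have h7 : (0:ℝ) ≤ ∑ e ∈ X, C e := Finset.sum_nonneg fun e _ => hC0 e
            rw [f1]; linarith
        calc sInf RHS ≤ (m:ℝ) := h1
          _ ≤ M := hMm
          _ ≤ f1 C (c i₀) X (m + 1) := h2
          _ ≤ _ := Finset.le_sup' (fun i : U => f1 C (c i) X (m + 1)) (Finset.mem_univ i₀)
end

section
/- In the Balanced-Partition reduction for Recoverable Selection with two scenarios (Theorem 1 construction): there exists I ⊂ [2n] with |I| = n and ∑_{i∈I} a_i = b if and only if opt₂ ≤ n·M₁ + (n+1)·b, where opt₂ = min_{|X|=p} max_{S∈{S1,S2}} ( ∑_{e∈X} C_e + min_{Y: |Y|=p, |Y\X|≤k} ∑_{e∈Y} c^S_e ). -/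
open Finset

/-- The recoverable cost `f₂(X,S)`: first-stage cost of `X` plus the minimum
second-stage cost over all `Y` with `|Y| = p` and `|Y \ X| ≤ k`. -/
noncomputable def f2 {ι : Type*} [Fintype ι] [DecidableEq ι]
    (C c : ι → ℝ) (X : Finset ι) (p k : ℕ) : ℝ :=
  ∑ e ∈ X, C e +
    sInf {v : ℝ | ∃ Y : Finset ι, Y.card = p ∧ (Y \ X).card ≤ k ∧
      v = ∑ e ∈ Y, c e}

section Aux
variable {ι : Type*} [Fintype ι] [DecidableEq ι]

lemma inner_finite (c : ι → ℝ) (X : Finset ι) (p k : ℕ) :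
    {v : ℝ | ∃ Y : Finset ι, Y.card = p ∧ (Y \ X).card ≤ k ∧
      v = ∑ e ∈ Y, c e}.Finite := by
  apply Set.Finite.subset (Set.finite_range fun Y : Finset ι => ∑ e ∈ Y, c e)
  rintro v ⟨Y, -, -, rfl⟩
  exact ⟨Y, rfl⟩

lemma inner_nonempty (c : ι → ℝ) (X : Finset ι) (p k : ℕ) (hX : X.card = p) :
    {v : ℝ | ∃ Y : Finset ι, Y.card = p ∧ (Y \ X).card ≤ k ∧
      v = ∑ e ∈ Y, c e}.Nonempty :=
  ⟨∑ e ∈ X, c e, X, hX, by simp, rfl⟩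

lemma f2_le (C c : ι → ℝ) (X Y : Finset ι) (p k : ℕ) (hY : Y.card = p)
    (hYX : (Y \ X).card ≤ k) :
    f2 C c X p k ≤ ∑ e ∈ X, C e + ∑ e ∈ Y, c e := by
  unfold f2
  gcongr
  exact csInf_le (inner_finite c X p k).bddBelow ⟨Y, hY, hYX, rfl⟩

lemma f2_exists (C c : ι → ℝ) (X : Finset ι) (p k : ℕ) (hX : X.card = p) :
    ∃ Y : Finset ι, Y.card = p ∧ (Y \ X).card ≤ k ∧
      f2 C c X p k = ∑ e ∈ X, C e + ∑ e ∈ Y, c e := by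
  obtain ⟨Y, h1, h2, h3⟩ :=
    (inner_nonempty c X p k hX).csInf_mem (inner_finite c X p k)
  exact ⟨Y, h1, h2, by rw [f2, h3]⟩

end Aux

lemma card3 {α β γ : Type*} (Z : Finset (α ⊕ (β ⊕ γ))) :
    Z.toLeft.card + Z.toRight.toLeft.card + Z.toRight.toRight.card = Z.card := by
  have h1 := Z.card_toLeft_add_card_toRight
  have h2 := Z.toRight.card_toLeft_add_card_toRight
  omega

lemma sum_elim3 {α β γ : Type*} (Z : Finset (α ⊕ (β ⊕ γ)))
    (g : α → ℝ) (h : β → ℝ) (r : γ → ℝ) :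
    ∑ x ∈ Z, Sum.elim g (Sum.elim h r) x
      = (∑ x ∈ Z.toLeft, g x + ((∑ x ∈ Z.toRight.toLeft, h x) + ∑ x ∈ Z.toRight.toRight, r x)) := by
  conv_lhs => rw [← Z.toLeft_disjSum_toRight, Finset.sum_disjSum]
  congr 1
  conv_lhs => rw [← Z.toRight.toLeft_disjSum_toRight, Finset.sum_disjSum]
  rfl

lemma card_sdiff3 {α β γ : Type*} [DecidableEq α] [DecidableEq β] [DecidableEq γ]
    (Y X : Finset (α ⊕ (β ⊕ γ))) :
    (Y \ X).card = (Y.toLeft \ X.toLeft).card + (Y.toRight.toLeft \ X.toRight.toLeft).card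
      + (Y.toRight.toRight \ X.toRight.toRight).card := by
  rw [← card3]
  simp [Finset.toLeft_sdiff, Finset.toRight_sdiff]

lemma outer_finite {α : Type*} [Fintype α] [DecidableEq α] (P : Finset α → Prop) (g : Finset α → ℝ) :
    {v : ℝ | ∃ X : Finset α, P X ∧ v = g X}.Finite := by
  apply Set.Finite.subset (Set.finite_range g)
  rintro v ⟨X, -, rfl⟩
  exact ⟨X, rfl⟩

set_option maxHeartbeats 1000000 in
theorem balanced_partition_recoverable_reduction (n k b : ℕ) (hn : 1 ≤ n)
    (hk : 1 ≤ k) (a : Fin (2 * n) → ℕ) (ha : ∀ i, 0 < a i)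
    (hsum : ∑ i, a i = 2 * b)
    (M1 M2 : ℝ) (hM1 : M1 = 4 * n * b) (hM2 : M2 = 2 * n * M1)
    (C c1 c2 : (Fin (2 * n) ⊕ (Fin k ⊕ Fin k)) → ℝ)
    (hC : C = Sum.elim (fun _ => M1) (Sum.elim (fun _ => 0) (fun _ => M2)))
    (hc1 : c1 = Sum.elim (fun i => b + (a i : ℝ))
      (Sum.elim (fun _ => M2) (fun _ => 0)))
    (hc2 : c2 = Sum.elim (fun i => b + 2 * b / n - (a i : ℝ))
      (Sum.elim (fun _ => M2) (fun _ => 0))) :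
    (∃ I : Finset (Fin (2 * n)), I.card = n ∧ ∑ i ∈ I, a i = b) ↔
      sInf {v : ℝ | ∃ X : Finset (Fin (2 * n) ⊕ (Fin k ⊕ Fin k)),
          X.card = n + k ∧
          v = max (f2 C c1 X (n + k) k) (f2 C c2 X (n + k) k)} ≤
        n * M1 + (n + 1) * b := by
  have hnb : n ≤ b := by
    have h1 : 2 * n ≤ ∑ i, a i := by
      calc (2 * n : ℕ) = ∑ _i : Fin (2 * n), 1 := by simp
      _ ≤ ∑ i, a i := Finset.sum_le_sum fun i _ => ha i
    omega
  have hb1 : 1 ≤ b := le_trans hn hnb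
  have hnR : (1 : ℝ) ≤ (n : ℝ) := by exact_mod_cast hn
  have hbR : (1 : ℝ) ≤ (b : ℝ) := by exact_mod_cast hb1
  have hnbR : (n : ℝ) ≤ (b : ℝ) := by exact_mod_cast hnb
  have hnne : (n : ℝ) ≠ 0 := by positivity
  -- the value 2b/n
  set d : ℝ := 2 * (b : ℝ) / (n : ℝ) with hd
  have hnd : (n : ℝ) * d = 2 * b := by rw [hd]; field_simp
  have hdpos : 0 < d := by positivity
  constructor
  · rintro ⟨I, hIcard, hIsum⟩
    set X : Finset (Fin (2 * n) ⊕ (Fin k ⊕ Fin k)) :=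
      I.disjSum ((univ : Finset (Fin k)).disjSum (∅ : Finset (Fin k))) with hX
    set Y : Finset (Fin (2 * n) ⊕ (Fin k ⊕ Fin k)) :=
      I.disjSum ((∅ : Finset (Fin k)).disjSum (univ : Finset (Fin k))) with hY
    have hXcard : X.card = n + k := by simp [hX, hIcard]
    have hYcard : Y.card = n + k := by simp [hY, hIcard]
    have hYX : (Y \ X).card ≤ k := by
      rw [card_sdiff3]
      simp only [hX, hY, Finset.toLeft_disjSum, Finset.toRight_disjSum]
      simp
    have hIa : ∑ i ∈ I, (a i : ℝ) = (b : ℝ) := by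
      rw [← Nat.cast_sum, hIsum]
    have hCX : ∑ e ∈ X, C e = n * M1 := by
      subst hC
      rw [sum_elim3]
      simp only [hX, Finset.toLeft_disjSum, Finset.toRight_disjSum, Finset.sum_const,
        Finset.sum_empty, hIcard, nsmul_eq_mul]
      simp
    have hY1 : ∑ e ∈ Y, c1 e = (n + 1) * (b : ℝ) := by
      subst hc1
      rw [sum_elim3]
      simp only [hY, Finset.toLeft_disjSum, Finset.toRight_disjSum, Finset.sum_empty,
        Finset.sum_const_zero, Finset.sum_add_distrib, Finset.sum_const, hIcard,
        nsmul_eq_mul, hIa, Finset.card_empty, Nat.cast_zero, zero_mul, add_zero]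
      push_cast
      ring
    have hY2 : ∑ e ∈ Y, c2 e = (n + 1) * (b : ℝ) := by
      subst hc2
      rw [sum_elim3]
      simp only [hY, Finset.toLeft_disjSum, Finset.toRight_disjSum, Finset.sum_empty,
        Finset.sum_const_zero, Finset.sum_sub_distrib, Finset.sum_const, hIcard,
        nsmul_eq_mul, hIa, Finset.card_empty, Nat.cast_zero, zero_mul, add_zero]
      linear_combination hnd
    have hb1' : f2 C c1 X (n + k) k ≤ n * M1 + (n + 1) * b := by
      have := f2_le C c1 X Y (n + k) k hYcard hYX
      rw [hCX, hY1] at this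
      exact this
    have hb2' : f2 C c2 X (n + k) k ≤ n * M1 + (n + 1) * b := by
      have := f2_le C c2 X Y (n + k) k hYcard hYX
      rw [hCX, hY2] at this
      exact this
    refine le_trans (csInf_le ?_ ?_) (max_le hb1' hb2')
    · exact (outer_finite _ _).bddBelow
    · exact ⟨X, hXcard, rfl⟩
  · intro hle
    -- the outer set is attained at some X
    have hcard_univ : n + k ≤ (univ : Finset (Fin (2 * n) ⊕ (Fin k ⊕ Fin k))).card := by
      simp [Fintype.card_sum]
      omega
    obtain ⟨X0, -, hX0⟩ := Finset.exists_subset_card_eq hcard_univ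
    have hne : {v : ℝ | ∃ X : Finset (Fin (2 * n) ⊕ (Fin k ⊕ Fin k)),
        X.card = n + k ∧
        v = max (f2 C c1 X (n + k) k) (f2 C c2 X (n + k) k)}.Nonempty :=
      ⟨_, X0, hX0, rfl⟩
    obtain ⟨X, hXcard, hXval⟩ := hne.csInf_mem (outer_finite _ _)
    rw [hXval] at hle
    have h1 : f2 C c1 X (n + k) k ≤ n * M1 + (n + 1) * b :=
      le_trans (le_max_left _ _) hle
    have h2 : f2 C c2 X (n + k) k ≤ n * M1 + (n + 1) * b :=
      le_trans (le_max_right _ _) hle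
    obtain ⟨Y1, hY1card, hY1diff, hY1eq⟩ := f2_exists C c1 X (n + k) k hXcard
    obtain ⟨Y2, hY2card, hY2diff, hY2eq⟩ := f2_exists C c2 X (n + k) k hXcard
    -- basic positivity facts
    have hM1pos : 0 < M1 := by rw [hM1]; nlinarith
    have hM2nn : 0 ≤ M2 := by rw [hM2]; nlinarith
    have hM2big : n * M1 + (n + 1) * b < M2 := by rw [hM2, hM1]; nlinarith
    have hc1nn : ∀ e, 0 ≤ c1 e := by
      rintro (i | j | j)
      · simp only [hc1, Sum.elim_inl]
        positivity
      · simpa [hc1] using hM2nn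
      · simp [hc1]
    have hs1nn : 0 ≤ ∑ e ∈ Y1, c1 e := Finset.sum_nonneg fun e _ => hc1nn e
    -- decompose X
    set L := X.toLeft with hLdef
    set FX := X.toRight.toLeft with hFXdef
    set R := X.toRight.toRight with hRdef
    have hparts : L.card + FX.card + R.card = n + k := by
      rw [hLdef, hFXdef, hRdef, card3, hXcard]
    have hFXk : FX.card ≤ k := by
      simpa using Finset.card_le_univ FX
    have hCX : ∑ e ∈ X, C e = L.card * M1 + R.card * M2 := by
      rw [hC, sum_elim3]
      simp [← hLdef, ← hFXdef, ← hRdef]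
    have hkey1 : (L.card : ℝ) * M1 + R.card * M2 + ∑ e ∈ Y1, c1 e
        ≤ n * M1 + (n + 1) * b := by
      rw [hY1eq, hCX] at h1
      linarith
    -- X contains no recovery elements
    have hR0 : R.card = 0 := by
      by_contra h
      have h1' : (1 : ℝ) ≤ (R.card : ℝ) := by
        exact_mod_cast Nat.one_le_iff_ne_zero.mpr h
      have hLnn : (0 : ℝ) ≤ (L.card : ℝ) * M1 :=
        mul_nonneg (Nat.cast_nonneg _) hM1pos.le
      linarith [mul_le_mul_of_nonneg_right h1' hM2nn, hkey1, hs1nn, hM2big]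
    have hRempty : R = ∅ := Finset.card_eq_zero.mp hR0
    -- X contains exactly n selection elements
    have hM1big : n * M1 + (n + 1) * b < (n + 1) * M1 := by rw [hM1]; nlinarith
    have hLn : L.card = n := by
      have hge : n ≤ L.card := by omega
      have hle' : L.card ≤ n := by
        by_contra h
        push_neg at h
        have h1' : ((n : ℝ) + 1) ≤ (L.card : ℝ) := by exact_mod_cast h
        have hRnn : (0 : ℝ) ≤ (R.card : ℝ) * M2 :=
          mul_nonneg (Nat.cast_nonneg _) hM2nn
        linarith [mul_le_mul_of_nonneg_right h1' hM1pos.le, hkey1, hs1nn, hRnn, hM1big]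
      omega
    have hCXn : ∑ e ∈ X, C e = n * M1 := by
      rw [hCX, hLn, hR0]
      simp
    have hLuniv : L ⊆ Finset.univ := Finset.subset_univ _
    -- shared card-chase: any feasible Y with no f-elements has L inside its e-part
    have chase : ∀ Y : Finset (Fin (2 * n) ⊕ (Fin k ⊕ Fin k)), Y.card = n + k →
        (Y \ X).card ≤ k → Y.toRight.toLeft = ∅ →
        L ⊆ Y.toLeft ∧ n ≤ Y.toLeft.card := by
      intro Y hYc hYd hYf
      have hYparts := card3 Y
      rw [hYc, hYf] at hYparts
      simp only [Finset.card_empty] at hYparts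
      have hdiff := card_sdiff3 Y X
      rw [← hLdef, ← hRdef, hYf, hRempty] at hdiff
      simp only [Finset.empty_sdiff, Finset.sdiff_empty, Finset.card_empty] at hdiff
      rw [hdiff] at hYd
      have hint := Finset.card_inter_add_card_sdiff Y.toLeft L
      have hintle : (Y.toLeft ∩ L).card ≤ n :=
        le_trans (Finset.card_le_card Finset.inter_subset_right) (le_of_eq hLn)
      have hintn : (Y.toLeft ∩ L).card = n := by omega
      have heq : Y.toLeft ∩ L = L :=
        Finset.eq_of_subset_of_card_le Finset.inter_subset_right (by omega)
      constructor
      · intro x hx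
        rw [← heq] at hx
        exact (Finset.mem_inter.mp hx).1
      · omega
    -- Scenario 1: sum over chosen Y1
    have hs1le : ∑ e ∈ Y1, c1 e ≤ (n + 1) * b := by
      rw [hY1eq, hCXn] at h1
      linarith
    have hs1 : ∑ e ∈ Y1, c1 e
        = ∑ i ∈ Y1.toLeft, ((b : ℝ) + a i) + Y1.toRight.toLeft.card * M2 := by
      rw [hc1, sum_elim3]
      simp
    have hJ1nn : (0 : ℝ) ≤ ∑ i ∈ Y1.toLeft, ((b : ℝ) + a i) :=
      Finset.sum_nonneg fun i _ => by positivity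
    have hFf1 : Y1.toRight.toLeft = ∅ := by
      rw [← Finset.card_eq_zero]
      by_contra h
      have h1' : (1 : ℝ) ≤ (Y1.toRight.toLeft.card : ℝ) := by
        exact_mod_cast Nat.one_le_iff_ne_zero.mpr h
      rw [hs1] at hs1le
      have hnM1nn : (0 : ℝ) ≤ (n : ℝ) * M1 := mul_nonneg (Nat.cast_nonneg _) hM1pos.le
      linarith [mul_le_mul_of_nonneg_right h1' hM2nn, hJ1nn, hM2big]
    obtain ⟨hLJ1, hJ1n⟩ := chase Y1 hY1card hY1diff hFf1
    have hupperR : ∑ i ∈ L, (a i : ℝ) ≤ b := by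
      have hmono : ∑ i ∈ L, ((b : ℝ) + a i) ≤ ∑ i ∈ Y1.toLeft, ((b : ℝ) + a i) :=
        Finset.sum_le_sum_of_subset_of_nonneg hLJ1 fun i _ _ => by positivity
      have hLsum : ∑ i ∈ L, ((b : ℝ) + a i) = n * b + ∑ i ∈ L, (a i : ℝ) := by
        rw [Finset.sum_add_distrib, Finset.sum_const, hLn, nsmul_eq_mul]
      rw [hs1, hFf1] at hs1le
      simp only [Finset.card_empty, Nat.cast_zero, zero_mul, add_zero] at hs1le
      rw [hLsum] at hmono
      linarith
    have hupper : ∑ i ∈ L, a i ≤ b := by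
      have : ((∑ i ∈ L, a i : ℕ) : ℝ) ≤ (b : ℝ) := by push_cast; exact hupperR
      exact_mod_cast this
    -- Scenario 2
    have hs2le : ∑ e ∈ Y2, c2 e ≤ (n + 1) * b := by
      rw [hY2eq, hCXn] at h2
      linarith
    have hs2 : ∑ e ∈ Y2, c2 e
        = Y2.toLeft.card * ((b : ℝ) + d) - (∑ i ∈ Y2.toLeft, (a i : ℝ))
          + Y2.toRight.toLeft.card * M2 := by
      rw [hc2, sum_elim3]
      simp only [Finset.sum_sub_distrib, Finset.sum_const, nsmul_eq_mul]
      simp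
    have haJ2 : ∑ i ∈ Y2.toLeft, (a i : ℝ) ≤ 2 * b := by
      have h' : ∑ i ∈ Y2.toLeft, a i ≤ 2 * b := by
        rw [← hsum]
        exact Finset.sum_le_sum_of_subset (Finset.subset_univ _)
      have : ((∑ i ∈ Y2.toLeft, a i : ℕ) : ℝ) ≤ ((2 * b : ℕ) : ℝ) := by
        exact_mod_cast h'
      push_cast at this
      linarith
    have hbd : (0 : ℝ) ≤ (b : ℝ) + d := by positivity
    have hJ2nn : (0 : ℝ) ≤ (Y2.toLeft.card : ℝ) * ((b : ℝ) + d) :=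
      mul_nonneg (Nat.cast_nonneg _) hbd
    have hFf2 : Y2.toRight.toLeft = ∅ := by
      rw [← Finset.card_eq_zero]
      by_contra h
      have h1' : (1 : ℝ) ≤ (Y2.toRight.toLeft.card : ℝ) := by
        exact_mod_cast Nat.one_le_iff_ne_zero.mpr h
      rw [hs2] at hs2le
      have hnM1 : 2 * (b : ℝ) ≤ (n : ℝ) * M1 := by rw [hM1]; nlinarith
      linarith [mul_le_mul_of_nonneg_right h1' hM2nn, hJ2nn, haJ2, hM2big]
    obtain ⟨hLJ2, hJ2n⟩ := chase Y2 hY2card hY2diff hFf2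
    rw [hs2, hFf2] at hs2le
    simp only [Finset.card_empty, Nat.cast_zero, zero_mul, add_zero] at hs2le
    have hJ2card : Y2.toLeft.card = n := by
      by_contra h
      have h' : n + 1 ≤ Y2.toLeft.card := by omega
      have h1' : ((n : ℝ) + 1) ≤ (Y2.toLeft.card : ℝ) := by exact_mod_cast h'
      linarith [mul_le_mul_of_nonneg_right h1' hbd, hs2le, haJ2, hnd, hdpos]
    have hLJ2eq : L = Y2.toLeft :=
      Finset.eq_of_subset_of_card_le hLJ2 (by omega)
    have hlowerR : (b : ℝ) ≤ ∑ i ∈ L, (a i : ℝ) := by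
      rw [← hLJ2eq, hLn] at hs2le
      linarith [hnd]
    have hlower : b ≤ ∑ i ∈ L, a i := by
      have : ((b : ℕ) : ℝ) ≤ ((∑ i ∈ L, a i : ℕ) : ℝ) := by push_cast; exact hlowerR
      exact_mod_cast this
    exact ⟨L, hLn, le_antisymm hupper hlower⟩
end

section
/- In the 3-SAT reduction for Recoverable Selection (Theorem 2 construction) with k = 1 and p = m: the formula is satisfiable if and only if opt₂ = 0; and if the formula is unsatisfiable then opt₂ ≥ 1. Specifically, a selection X of p items with max_S f₂(X,S) = 0 exists iff one can choose exactly one literal-item per clause so that no two chosen items correspond to contradictory literals. -/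
/-! If some choice `g` of one literal item per clause contains no contradictory pair, let `X`
consist of the chosen items: its first-stage cost is `0`, and every scenario charges at most one
item of `X`, which the single allowed swap exchanges for the free recovery item `r`.
Conversely let `|X| = m`. If `r ∈ X`, the first-stage cost alone is `n ≥ 1`. Otherwise, by
pigeonhole, either two items of one clause lie in `X`, or `X` picks one item from every clause and,
failing the above, contains a contradictory pair. Either way some scenario charges two items of
`X`, and one swap removes at most one of them. Finally, conflict-free choices are the same as
satisfying assignments: make the chosen literals true. -/

open Finset

/-- Two literal-items are contradictory if they correspond to the same variable
with opposite signs. -/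
def Contr {nv m : ℕ} (cl : Fin m → Fin 3 → Fin nv × Bool)
    (e e' : Fin m × Fin 3) : Prop :=
  (cl e.1 e.2).1 = (cl e'.1 e'.2).1 ∧ (cl e.1 e.2).2 ≠ (cl e'.1 e'.2).2

/-- The scenario set of the 3-SAT reduction: one scenario per pair of
contradictory literal-items and one per clause. -/
def SatScenarios {nv m : ℕ} (cl : Fin m → Fin 3 → Fin nv × Bool) :
    Set ((Fin m × Fin 3) ⊕ Unit → ℝ) :=
  {c | (∃ e e' : Fin m × Fin 3, Contr cl e e' ∧
          c = fun it => if it = Sum.inl e ∨ it = Sum.inl e' then 1 else 0) ∨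
       (∃ i : Fin m,
          c = fun it => match it with
            | Sum.inl (i', _) => if i' = i then 1 else 0
            | Sum.inr _ => 0)}

section RecoverableCost

variable {ι : Type*} [DecidableEq ι]

theorem sum_sub_card_sdiff_le_sum {c : ι → ℝ} (hc : ∀ e, 0 ≤ c e ∧ c e ≤ 1)
    {X Y : Finset ι} (hXY : X.card = Y.card) :
    ∑ e ∈ X, c e - (Y \ X).card ≤ ∑ e ∈ Y, c e := by
  have hout : ∑ e ∈ X \ Y, c e ≤ (Y \ X).card := by
    rw [← card_sdiff_comm hXY]
    simpa using sum_le_sum fun e (_ : e ∈ X \ Y) => (hc e).2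
  have hin : ∑ e ∈ X ∩ Y, c e ≤ ∑ e ∈ Y, c e :=
    sum_le_sum_of_subset_of_nonneg inter_subset_right fun e _ _ => (hc e).1
  linarith [sum_inter_add_sum_sdiff X Y c]

theorem exists_card_sdiff_le_one_sum_eq_zero {c : ι → ℝ} {X : Finset ι} {r : ι}
    (hr : r ∉ X) (hcr : c r = 0) (a : ι) (hc : ∀ e ∈ X, e ≠ a → c e = 0) :
    ∃ Y : Finset ι, Y.card = X.card ∧ (Y \ X).card ≤ 1 ∧ ∑ e ∈ Y, c e = 0 := by
  by_cases ha : a ∈ X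
  · have hr' : r ∉ X.erase a := fun h => hr (mem_of_mem_erase h)
    refine ⟨insert r (X.erase a), ?_, ?_, ?_⟩
    · rw [card_insert_of_notMem hr', card_erase_add_one ha]
    · refine (card_le_card (t := {r}) fun y hy => ?_).trans (card_singleton r).le
      simp only [mem_sdiff, mem_insert, mem_erase] at hy
      simp only [mem_singleton]
      tauto
    · rw [sum_insert hr', hcr, zero_add]
      exact sum_eq_zero fun e he => hc e (mem_of_mem_erase he) (ne_of_mem_erase he)
  · exact ⟨X, rfl, by simp, sum_eq_zero fun e he => hc e he (ne_of_mem_of_not_mem he ha)⟩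

variable [Fintype ι] {C c : ι → ℝ} {X : Finset ι} {p k : ℕ}

theorem f2_nonneg (hC : ∀ e, 0 ≤ C e) (hc : ∀ e, 0 ≤ c e) : 0 ≤ f2 C c X p k := by
  refine add_nonneg (sum_nonneg fun e _ => hC e) (Real.sInf_nonneg ?_)
  rintro v ⟨Y, -, -, rfl⟩
  exact sum_nonneg fun e _ => hc e

theorem f2_le_sum_add_sum (hc : ∀ e, 0 ≤ c e) {Y : Finset ι} (hY : Y.card = p)
    (hYX : (Y \ X).card ≤ k) : f2 C c X p k ≤ ∑ e ∈ X, C e + ∑ e ∈ Y, c e := by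
  unfold f2
  gcongr
  refine csInf_le ⟨0, ?_⟩ ⟨Y, hY, hYX, rfl⟩
  rintro v ⟨Y, -, -, rfl⟩
  exact sum_nonneg fun e _ => hc e

theorem sum_add_le_f2 {a : ℝ} (hX : X.card = p)
    (h : ∀ Y : Finset ι, Y.card = p → (Y \ X).card ≤ k → a ≤ ∑ e ∈ Y, c e) :
    ∑ e ∈ X, C e + a ≤ f2 C c X p k := by
  unfold f2
  gcongr
  refine le_csInf ⟨_, X, hX, by simp, rfl⟩ ?_
  rintro v ⟨Y, hY, hYX, rfl⟩
  exact h Y hY hYX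

theorem one_le_f2_of_pair_mem (hC : ∀ e, 0 ≤ C e) (hc : ∀ e, 0 ≤ c e ∧ c e ≤ 1)
    (hX : X.card = p) {a b : ι} (hab : a ≠ b) (ha : a ∈ X) (hb : b ∈ X)
    (hca : c a = 1) (hcb : c b = 1) : 1 ≤ f2 C c X p 1 := by
  have hpair : 2 ≤ ∑ e ∈ X, c e := by
    calc (2 : ℝ) = ∑ e ∈ {a, b}, c e := by rw [sum_pair hab, hca, hcb]; norm_num
      _ ≤ ∑ e ∈ X, c e :=
        sum_le_sum_of_subset_of_nonneg (insert_subset ha (singleton_subset_iff.2 hb))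
          fun e _ _ => (hc e).1
  have := sum_add_le_f2 (C := C) (a := 1) hX fun Y hY hYX => by
    have := sum_sub_card_sdiff_le_sum hc (hX.trans hY.symm)
    have : ((Y \ X).card : ℝ) ≤ 1 := by exact_mod_cast hYX
    linarith
  linarith [sum_nonneg fun e (_ : e ∈ X) => hC e]

end RecoverableCost

section Reduction

variable {nv m : ℕ} {cl : Fin m → Fin 3 → Fin nv × Bool}

theorem exists_conflictFree_iff_satisfiable :
    (∃ g : Fin m → Fin 3, ∀ i j : Fin m, ¬ Contr cl (i, g i) (j, g j)) ↔
      ∃ σ : Fin nv → Bool, ∀ i : Fin m, ∃ t : Fin 3, σ (cl i t).1 = (cl i t).2 := by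
  constructor
  · rintro ⟨g, hg⟩
    refine ⟨fun x => decide (∃ j, cl j (g j) = (x, true)), fun i => ⟨g i, ?_⟩⟩
    rcases hlit : cl i (g i) with ⟨x, _ | _⟩
    · simp only [decide_eq_false_iff_not, not_exists]
      intro j hj
      exact hg i j (by simp [Contr, hlit, hj])
    · simpa using ⟨i, hlit⟩
  · rintro ⟨σ, hσ⟩
    choose g hg using hσ
    exact ⟨g, fun i j ⟨hvar, hsign⟩ => hsign (by rw [← hg i, ← hg j, hvar])⟩

def conflictScenario (e e' : Fin m × Fin 3) : (Fin m × Fin 3) ⊕ Unit → ℝ :=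
  fun it => if it = Sum.inl e ∨ it = Sum.inl e' then 1 else 0

def clauseScenario (i : Fin m) : (Fin m × Fin 3) ⊕ Unit → ℝ :=
  fun it => match it with
    | Sum.inl (i', _) => if i' = i then 1 else 0
    | Sum.inr _ => 0

theorem conflictScenario_mem {e e' : Fin m × Fin 3} (h : Contr cl e e') :
    conflictScenario e e' ∈ SatScenarios cl :=
  Or.inl ⟨e, e', h, rfl⟩

theorem clauseScenario_mem (i : Fin m) : clauseScenario i ∈ SatScenarios cl :=
  Or.inr ⟨i, rfl⟩

theorem satScenarios_finite (cl : Fin m → Fin 3 → Fin nv × Bool) :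
    (SatScenarios cl).Finite := by
  refine (Set.finite_range
    (Sum.elim (fun ee : (Fin m × Fin 3) × (Fin m × Fin 3) => conflictScenario ee.1 ee.2)
      clauseScenario)).subset ?_
  rintro c (⟨e, e', -, rfl⟩ | ⟨i, rfl⟩)
  exacts [⟨Sum.inl (e, e'), rfl⟩, ⟨Sum.inr i, rfl⟩]

theorem mem_Icc_of_mem_satScenarios {c : (Fin m × Fin 3) ⊕ Unit → ℝ}
    (hc : c ∈ SatScenarios cl) (it : (Fin m × Fin 3) ⊕ Unit) : c it ∈ Set.Icc 0 1 := by
  rw [Set.mem_Icc]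
  rcases hc with ⟨e, e', -, rfl⟩ | ⟨i, rfl⟩
  · dsimp only
    split_ifs <;> norm_num
  · rcases it with ⟨j, t⟩ | u
    · dsimp only
      split_ifs <;> norm_num
    · norm_num

theorem apply_inr_eq_zero_of_mem_satScenarios {c : (Fin m × Fin 3) ⊕ Unit → ℝ}
    (hc : c ∈ SatScenarios cl) (u : Unit) : c (Sum.inr u) = 0 := by
  rcases hc with ⟨e, e', -, rfl⟩ | ⟨i, rfl⟩ <;> simp

def selection (g : Fin m → Fin 3) : Finset ((Fin m × Fin 3) ⊕ Unit) :=
  univ.map ⟨fun i => Sum.inl (i, g i), fun _ _ h => (Prod.ext_iff.1 (Sum.inl_injective h)).1⟩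

theorem card_selection (g : Fin m → Fin 3) : (selection g).card = m := by
  simp [selection]

theorem mem_selection {g : Fin m → Fin 3} {it : (Fin m × Fin 3) ⊕ Unit} :
    it ∈ selection g ↔ ∃ i, Sum.inl (i, g i) = it := by
  simp only [selection, mem_map, mem_univ, true_and]
  rfl

theorem exists_eq_zero_on_selection {g : Fin m → Fin 3}
    (hg : ∀ i j : Fin m, ¬ Contr cl (i, g i) (j, g j)) {c : (Fin m × Fin 3) ⊕ Unit → ℝ}
    (hc : c ∈ SatScenarios cl) : ∃ a, ∀ it ∈ selection g, it ≠ a → c it = 0 := by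
  rcases hc with ⟨e, e', hee, rfl⟩ | ⟨i, rfl⟩
  · have hnot : ¬ (Sum.inl e ∈ selection g ∧ Sum.inl e' ∈ selection g) := by
      rintro ⟨he, he'⟩
      obtain ⟨i, hi⟩ := mem_selection.1 he
      obtain ⟨j, hj⟩ := mem_selection.1 he'
      exact hg i j (by rwa [Sum.inl_injective hi, Sum.inl_injective hj])
    by_cases he' : Sum.inl e' ∈ selection g
    · refine ⟨Sum.inl e', fun it hit hne => if_neg ?_⟩
      rintro (rfl | rfl)
      exacts [hnot ⟨hit, he'⟩, hne rfl]
    · refine ⟨Sum.inl e, fun it hit hne => if_neg ?_⟩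
      rintro (rfl | rfl)
      exacts [hne rfl, he' hit]
  · refine ⟨Sum.inl (i, g i), fun it hit hne => ?_⟩
    obtain ⟨j, rfl⟩ := mem_selection.1 hit
    have hji : j ≠ i := by
      rintro rfl
      exact hne rfl
    exact if_neg hji

end Reduction

section RobustCost

variable {nv m : ℕ} {cl : Fin m → Fin 3 → Fin nv × Bool}

def firstStageCost (m nv : ℕ) : (Fin m × Fin 3) ⊕ Unit → ℝ :=
  Sum.elim (fun _ => 0) (fun _ => nv)

theorem firstStageCost_nonneg (it : (Fin m × Fin 3) ⊕ Unit) : 0 ≤ firstStageCost m nv it := by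
  rcases it with _ | _ <;> simp [firstStageCost]

theorem sum_firstStageCost_selection (g : Fin m → Fin 3) :
    ∑ it ∈ selection g, firstStageCost m nv it = 0 := by
  refine sum_eq_zero fun it hit => ?_
  obtain ⟨i, rfl⟩ := mem_selection.1 hit
  rfl

/-- The paper's `max_S f₂(X, S)` for `p = m` and `k = 1`. -/
noncomputable def robustCost (cl : Fin m → Fin 3 → Fin nv × Bool)
    (C : (Fin m × Fin 3) ⊕ Unit → ℝ) (X : Finset ((Fin m × Fin 3) ⊕ Unit)) : ℝ :=
  sSup {w : ℝ | ∃ c ∈ SatScenarios cl, w = f2 C c X m 1}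

variable {C c : (Fin m × Fin 3) ⊕ Unit → ℝ} {X : Finset ((Fin m × Fin 3) ⊕ Unit)}

theorem le_robustCost (hc : c ∈ SatScenarios cl) : f2 C c X m 1 ≤ robustCost cl C X := by
  refine le_csSup (((satScenarios_finite cl).image fun c => f2 C c X m 1).subset ?_).bddAbove
    ⟨c, hc, rfl⟩
  rintro w ⟨c, hc, rfl⟩
  exact ⟨c, hc, rfl⟩

theorem robustCost_nonneg (hC : ∀ it, 0 ≤ C it) : 0 ≤ robustCost cl C X := by
  refine Real.sSup_nonneg ?_
  rintro w ⟨c, hc, rfl⟩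
  exact f2_nonneg hC fun it => (mem_Icc_of_mem_satScenarios hc it).1

theorem robustCost_selection_eq_zero {g : Fin m → Fin 3}
    (hg : ∀ i j : Fin m, ¬ Contr cl (i, g i) (j, g j)) :
    robustCost cl (firstStageCost m nv) (selection g) = 0 := by
  refine le_antisymm (Real.sSup_nonpos ?_) (robustCost_nonneg firstStageCost_nonneg)
  rintro w ⟨c, hc, rfl⟩
  obtain ⟨a, ha⟩ := exists_eq_zero_on_selection hg hc
  obtain ⟨Y, hY, hYX, hYc⟩ := exists_card_sdiff_le_one_sum_eq_zero (r := Sum.inr ())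
    (by simp [mem_selection]) (apply_inr_eq_zero_of_mem_satScenarios hc ()) a ha
  calc f2 (firstStageCost m nv) c (selection g) m 1
      ≤ ∑ it ∈ selection g, firstStageCost m nv it + ∑ it ∈ Y, c it :=
        f2_le_sum_add_sum (fun it => (mem_Icc_of_mem_satScenarios hc it).1)
          (hY.trans (card_selection g)) hYX
    _ = 0 := by rw [sum_firstStageCost_selection, hYc, add_zero]

theorem forall_exists_mem_of_card_eq (hX : X.card = m) (hr : Sum.inr () ∉ X)
    (hsame : ∀ i t t', t ≠ t' → Sum.inl (i, t) ∈ X → Sum.inl (i, t') ∉ X) :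
    ∀ i, ∃ t, Sum.inl (i, t) ∈ X := by
  intro i
  by_contra! hi
  have hcard : (univ.erase i).card < X.card := by
    rw [card_erase_of_mem (mem_univ i), card_univ, Fintype.card_fin, hX]
    have := i.pos
    omega
  have hmaps : Set.MapsTo (Sum.elim Prod.fst fun _ => i) (X : Set ((Fin m × Fin 3) ⊕ Unit))
      (univ.erase i : Finset (Fin m)) := by
    rintro (⟨j, t⟩ | ⟨⟩) hx
    · simpa using fun hji : j = i => hi t (hji ▸ hx)
    · exact absurd hx hr
  obtain ⟨x, hx, y, hy, hxy, hfxy⟩ := exists_ne_map_eq_of_card_lt_of_maps_to hcard hmaps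
  rcases x with ⟨j, t⟩ | ⟨⟩ <;> rcases y with ⟨j', t'⟩ | ⟨⟩
  · obtain rfl : j = j' := hfxy
    exact hsame j t t' (fun htt => hxy (htt ▸ rfl)) hx hy
  all_goals exact absurd ‹_ ∈ X› hr

theorem exists_mem_satScenarios_one_le_f2 (hX : X.card = m)
    (hunsat : ¬ ∃ g : Fin m → Fin 3, ∀ i j : Fin m, ¬ Contr cl (i, g i) (j, g j)) :
    ∃ c ∈ SatScenarios cl, 1 ≤ f2 (firstStageCost m nv) c X m 1 := by
  by_cases hr : Sum.inr () ∈ X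
  · have i₀ : Fin m := ⟨0, hX ▸ card_pos.2 ⟨_, hr⟩⟩
    have hnv : (1 : ℝ) ≤ nv := by exact_mod_cast (cl i₀ 0).1.pos
    have hc := clauseScenario_mem (cl := cl) i₀
    have hf2 := sum_add_le_f2 (C := firstStageCost m nv) (k := 1) (a := 0) hX fun Y _ _ =>
      sum_nonneg fun it _ => (mem_Icc_of_mem_satScenarios hc it).1
    have hCr : (nv : ℝ) ≤ ∑ it ∈ X, firstStageCost m nv it :=
      single_le_sum (fun it _ => firstStageCost_nonneg it) hr
    exact ⟨_, hc, by linarith⟩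
  by_cases hsame : ∃ i t t', t ≠ t' ∧ Sum.inl (i, t) ∈ X ∧ Sum.inl (i, t') ∈ X
  · obtain ⟨i, t, t', htt, ht, ht'⟩ := hsame
    have hc := clauseScenario_mem (cl := cl) i
    exact ⟨_, hc, one_le_f2_of_pair_mem firstStageCost_nonneg (mem_Icc_of_mem_satScenarios hc)
      hX (by simp [htt]) ht ht' (by simp [clauseScenario]) (by simp [clauseScenario])⟩
  push Not at hsame
  choose g hg using forall_exists_mem_of_card_eq hX hr hsame
  simp only [not_exists, not_forall, not_not] at hunsat
  obtain ⟨i, j, hij⟩ := hunsat g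
  have hc := conflictScenario_mem hij
  exact ⟨_, hc, one_le_f2_of_pair_mem firstStageCost_nonneg (mem_Icc_of_mem_satScenarios hc)
    hX (fun h => hij.2 (by rw [Sum.inl_injective h])) (hg i) (hg j)
    (by simp [conflictScenario]) (by simp [conflictScenario])⟩

theorem one_le_robustCost (hX : X.card = m)
    (hunsat : ¬ ∃ g : Fin m → Fin 3, ∀ i j : Fin m, ¬ Contr cl (i, g i) (j, g j)) :
    1 ≤ robustCost cl (firstStageCost m nv) X :=
  let ⟨_, hc, hc1⟩ := exists_mem_satScenarios_one_le_f2 hX hunsat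
  hc1.trans (le_robustCost hc)

theorem sInf_robustCost_eq_zero {g : Fin m → Fin 3}
    (hg : ∀ i j : Fin m, ¬ Contr cl (i, g i) (j, g j)) :
    sInf {v : ℝ | ∃ X : Finset ((Fin m × Fin 3) ⊕ Unit), X.card = m ∧
      v = robustCost cl (firstStageCost m nv) X} = 0 := by
  refine IsLeast.csInf_eq
    ⟨⟨selection g, card_selection g, (robustCost_selection_eq_zero hg).symm⟩, ?_⟩
  rintro v ⟨X, -, rfl⟩
  exact robustCost_nonneg firstStageCost_nonneg

theorem one_le_sInf_robustCost
    (hunsat : ¬ ∃ g : Fin m → Fin 3, ∀ i j : Fin m, ¬ Contr cl (i, g i) (j, g j)) :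
    1 ≤ sInf {v : ℝ | ∃ X : Finset ((Fin m × Fin 3) ⊕ Unit), X.card = m ∧
      v = robustCost cl (firstStageCost m nv) X} := by
  refine le_csInf ⟨_, selection fun _ => 0, card_selection _, rfl⟩ ?_
  rintro v ⟨X, hX, rfl⟩
  exact one_le_robustCost hX hunsat

end RobustCost

theorem threeSat_recoverable_reduction_general (nv m : ℕ)
    (cl : Fin m → Fin 3 → Fin nv × Bool)
    (C : (Fin m × Fin 3) ⊕ Unit → ℝ)
    (hC : C = Sum.elim (fun _ => 0) (fun _ => (nv : ℝ))) :
    ((∃ σ : Fin nv → Bool, ∀ i : Fin m, ∃ t : Fin 3, σ (cl i t).1 = (cl i t).2) ↔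
      sInf {v : ℝ | ∃ X : Finset ((Fin m × Fin 3) ⊕ Unit), X.card = m ∧
        v = sSup {w : ℝ | ∃ c ∈ SatScenarios cl, w = f2 C c X m 1}} = 0) ∧
    ((¬ ∃ σ : Fin nv → Bool, ∀ i : Fin m, ∃ t : Fin 3,
        σ (cl i t).1 = (cl i t).2) →
      1 ≤ sInf {v : ℝ | ∃ X : Finset ((Fin m × Fin 3) ⊕ Unit), X.card = m ∧
        v = sSup {w : ℝ | ∃ c ∈ SatScenarios cl, w = f2 C c X m 1}}) ∧
    ((∃ X : Finset ((Fin m × Fin 3) ⊕ Unit), X.card = m ∧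
        sSup {w : ℝ | ∃ c ∈ SatScenarios cl, w = f2 C c X m 1} = 0) ↔
      (∃ g : Fin m → Fin 3, ∀ i j : Fin m, ¬ Contr cl (i, g i) (j, g j))) := by
  obtain rfl : C = firstStageCost m nv := hC
  rw [← exists_conflictFree_iff_satisfiable]
  refine ⟨⟨fun ⟨g, hg⟩ => sInf_robustCost_eq_zero hg, fun h0 => ?_⟩,
    one_le_sInf_robustCost, ⟨fun ⟨X, hX, h0⟩ => ?_, fun ⟨g, hg⟩ =>
      ⟨selection g, card_selection g, robustCost_selection_eq_zero hg⟩⟩⟩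
  · by_contra hunsat
    have := one_le_sInf_robustCost (cl := cl) hunsat
    unfold robustCost at this
    linarith
  · by_contra hunsat
    have := one_le_robustCost (cl := cl) hX hunsat
    unfold robustCost at this
    linarith

theorem threeSat_recoverable_reduction (nv m : ℕ) (hm : 1 ≤ m)
    (cl : Fin m → Fin 3 → Fin nv × Bool)
    (C : (Fin m × Fin 3) ⊕ Unit → ℝ)
    (hC : C = Sum.elim (fun _ => 0) (fun _ => (nv : ℝ))) :
    ((∃ σ : Fin nv → Bool, ∀ i : Fin m, ∃ t : Fin 3, σ (cl i t).1 = (cl i t).2) ↔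
      sInf {v : ℝ | ∃ X : Finset ((Fin m × Fin 3) ⊕ Unit), X.card = m ∧
        v = sSup {w : ℝ | ∃ c ∈ SatScenarios cl, w = f2 C c X m 1}} = 0) ∧
    ((¬ ∃ σ : Fin nv → Bool, ∀ i : Fin m, ∃ t : Fin 3,
        σ (cl i t).1 = (cl i t).2) →
      1 ≤ sInf {v : ℝ | ∃ X : Finset ((Fin m × Fin 3) ⊕ Unit), X.card = m ∧
        v = sSup {w : ℝ | ∃ c ∈ SatScenarios cl, w = f2 C c X m 1}}) ∧
    ((∃ X : Finset ((Fin m × Fin 3) ⊕ Unit), X.card = m ∧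
        sSup {w : ℝ | ∃ c ∈ SatScenarios cl, w = f2 C c X m 1} = 0) ↔
      (∃ g : Fin m → Fin 3, ∀ i j : Fin m, ¬ Contr cl (i, g i) (j, g j))) :=
  threeSat_recoverable_reduction_general nv m cl C hC
end
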